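/- arXiv:quant-ph/0611289 — 6 statements merged into one kernel-verified Lean document; each statement's English description precedes it below -/
import Mathlib

section
/- Let ρ and σ be density operators on a finite-dimensional complex Hilbert space with spectral decompositions ρ = Σᵢ λᵢ |xᵢ⟩⟨xᵢ| and σ = Σⱼ γⱼ |yⱼ⟩⟨yⱼ|, and let p(i,j) = λᵢ·|⟨xᵢ, yⱼ⟩|², q(i,j) = γⱼ·|⟨xᵢ, yⱼ⟩|² be the associated Nussbaum–Szkola distributions. Then for every real s, Tr[ρ^{1−s} σ^{s}] = Σ_{(i,j)} p(i,j)^{1−s} q(i,j)^{s}, i.e. φ(s | ρ‖σ) = φ(s | p‖q) whenever both sides are defined. -/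
open scoped Matrix ComplexOrder
open Filter

noncomputable section

/-- Real power of a matrix, taken via the spectral decomposition when the matrix is
Hermitian (with the convention `0 ^ t` given by `Real.rpow`), and `0` otherwise. -/
def mpow {n : Type*} [Fintype n] [DecidableEq n] (A : Matrix n n ℂ) (t : ℝ) : Matrix n n ℂ :=
  if h : A.IsHermitian then
    (Matrix.IsHermitian.eigenvectorUnitary h : Matrix n n ℂ) *
      Matrix.diagonal (fun i => ((h.eigenvalues i ^ t : ℝ) : ℂ)) *
      (star (Matrix.IsHermitian.eigenvectorUnitary h : Matrix n n ℂ))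
  else 0

/-- Logarithm of a matrix via the spectral decomposition (Hermitian case), `0` otherwise. -/
def mlog {n : Type*} [Fintype n] [DecidableEq n] (A : Matrix n n ℂ) : Matrix n n ℂ :=
  if h : A.IsHermitian then
    (Matrix.IsHermitian.eigenvectorUnitary h : Matrix n n ℂ) *
      Matrix.diagonal (fun i => ((Real.log (h.eigenvalues i) : ℝ) : ℂ)) *
      (star (Matrix.IsHermitian.eigenvectorUnitary h : Matrix n n ℂ))
  else 0

/-- Exponential of a matrix via the spectral decomposition (Hermitian case), `0` otherwise. -/
def mexp {n : Type*} [Fintype n] [DecidableEq n] (A : Matrix n n ℂ) : Matrix n n ℂ :=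
  if h : A.IsHermitian then
    (Matrix.IsHermitian.eigenvectorUnitary h : Matrix n n ℂ) *
      Matrix.diagonal (fun i => ((Real.exp (h.eigenvalues i) : ℝ) : ℂ)) *
      (star (Matrix.IsHermitian.eigenvectorUnitary h : Matrix n n ℂ))
  else 0

/-- The orthogonal projection onto the span of the eigenvectors of a Hermitian matrix
corresponding to positive eigenvalues, denoted `{A > 0}` in the paper; `0` otherwise. -/
def posProj {n : Type*} [Fintype n] [DecidableEq n] (A : Matrix n n ℂ) : Matrix n n ℂ :=
  if h : A.IsHermitian then
    (Matrix.IsHermitian.eigenvectorUnitary h : Matrix n n ℂ) *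
      Matrix.diagonal (fun i => if 0 < h.eigenvalues i then (1 : ℂ) else 0) *
      (star (Matrix.IsHermitian.eigenvectorUnitary h : Matrix n n ℂ))
  else 0

/-- The `n`-fold tensor (Kronecker) power `ρ^{⊗n}`, as a matrix indexed by `Fin n → Fin d`. -/
def tensorPow {d : ℕ} (ρ : Matrix (Fin d) (Fin d) ℂ) (n : ℕ) :
    Matrix (Fin n → Fin d) (Fin n → Fin d) ℂ :=
  fun v w => ∏ t, ρ (v t) (w t)

/-- Quantum relative entropy `D(ρ‖σ) = Tr[ρ(log ρ − log σ)]`. -/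
def qRelEnt {d : ℕ} (ρ σ : Matrix (Fin d) (Fin d) ℂ) : ℝ :=
  ((ρ * (mlog ρ - mlog σ)).trace).re

/-- `φ(s | ρ‖σ) = log Tr[ρ^{1−s} σ^{s}]`. -/
def qphi {d : ℕ} (ρ σ : Matrix (Fin d) (Fin d) ℂ) (s : ℝ) : ℝ :=
  Real.log (((mpow ρ (1 - s)) * (mpow σ s)).trace.re)

set_option linter.unusedSectionVars false
set_option linter.unusedVariables false

section NSHelpers

variable {n : Type*} [Fintype n] [DecidableEq n]

lemma funCalc_indep (V W : Matrix n n ℂ)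
    (hV1 : star V * V = 1) (hV2 : V * star V = 1)
    (hW1 : star W * W = 1) (hW2 : W * star W = 1)
    (dV dW : n → ℝ)
    (h : V * Matrix.diagonal (fun i => (dV i : ℂ)) * star V
       = W * Matrix.diagonal (fun i => (dW i : ℂ)) * star W)
    (f : ℝ → ℂ) :
    V * Matrix.diagonal (fun i => f (dV i)) * star V
      = W * Matrix.diagonal (fun i => f (dW i)) * star W := by
  set X := star W * V with hX
  have hXD : X * Matrix.diagonal (fun i => (dV i : ℂ))
      = Matrix.diagonal (fun i => (dW i : ℂ)) * X := by
    calc star W * V * Matrix.diagonal (fun i => (dV i : ℂ))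
        = star W * (V * Matrix.diagonal (fun i => (dV i : ℂ)) * star V) * V := by
          rw [Matrix.mul_assoc, Matrix.mul_assoc, Matrix.mul_assoc, hV1, Matrix.mul_one]
      _ = star W * (W * Matrix.diagonal (fun i => (dW i : ℂ)) * star W) * V := by rw [h]
      _ = Matrix.diagonal (fun i => (dW i : ℂ)) * (star W * V) := by
          rw [← Matrix.mul_assoc, ← Matrix.mul_assoc, hW1, Matrix.one_mul, Matrix.mul_assoc]
  have hent : ∀ k i, X k i * (dV i : ℂ) = (dW k : ℂ) * X k i := by
    intro k i
    have := congrFun (congrFun hXD k) i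
    simpa [Matrix.mul_diagonal, Matrix.diagonal_mul] using this
  have hXf : X * Matrix.diagonal (fun i => f (dV i))
      = Matrix.diagonal (fun i => f (dW i)) * X := by
    ext k i
    simp only [Matrix.mul_diagonal, Matrix.diagonal_mul]
    by_cases hx0 : X k i = 0
    · simp [hx0]
    · have h1 : (dV i : ℂ) = (dW k : ℂ) := by
        have := hent k i
        rw [mul_comm ((dW k : ℂ)) (X k i)] at this
        exact mul_left_cancel₀ hx0 this
      have h2 : dV i = dW k := by exact_mod_cast h1
      rw [h2, mul_comm]
  have hWXV : W * X = V := by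
    rw [hX, ← Matrix.mul_assoc, hW2, Matrix.one_mul]
  have hXsV : X * star V = star W := by
    rw [hX, Matrix.mul_assoc, hV2, Matrix.mul_one]
  calc V * Matrix.diagonal (fun i => f (dV i)) * star V
      = W * (X * Matrix.diagonal (fun i => f (dV i))) * star V := by
        rw [← Matrix.mul_assoc, hWXV]
    _ = W * (Matrix.diagonal (fun i => f (dW i)) * X) * star V := by rw [hXf]
    _ = W * Matrix.diagonal (fun i => f (dW i)) * (X * star V) := by
        simp only [Matrix.mul_assoc]
    _ = W * Matrix.diagonal (fun i => f (dW i)) * star W := by rw [hXsV]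

lemma sum_smul_vecMulVec (c : n → ℂ) (x : n → n → ℂ) :
    ∑ i, c i • Matrix.vecMulVec (x i) (star (x i))
      = (Matrix.of fun a i => x i a) * Matrix.diagonal c
          * star (Matrix.of fun a i => x i a) := by
  ext a b
  rw [Matrix.mul_apply]
  simp only [Matrix.sum_apply, Matrix.smul_apply, Matrix.vecMulVec_apply, Pi.star_apply,
    smul_eq_mul, Matrix.mul_diagonal, Matrix.star_apply, Matrix.of_apply,
    RCLike.star_def]
  exact Finset.sum_congr rfl fun i _ => by ring

lemma trace_vmv (u v : n → ℂ) :
    (Matrix.vecMulVec u (star u) * Matrix.vecMulVec v (star v)).trace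
      = (star u ⬝ᵥ v) * (star v ⬝ᵥ u) := by
  simp only [Matrix.trace, Matrix.diag_apply, Matrix.mul_apply, Matrix.vecMulVec_apply,
    Pi.star_apply, dotProduct, RCLike.star_def]
  rw [Finset.sum_mul_sum, Finset.sum_comm]
  exact Finset.sum_congr rfl fun a _ => Finset.sum_congr rfl fun b _ => by ring

lemma vecMulVec_mulVec' (u w v : n → ℂ) :
    Matrix.vecMulVec u w *ᵥ v = (w ⬝ᵥ v) • u := by
  ext a
  simp only [Matrix.mulVec, Matrix.vecMulVec_apply, dotProduct, Pi.smul_apply,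
    smul_eq_mul, Finset.sum_mul]
  exact Finset.sum_congr rfl fun b _ => by ring

lemma sum_mulVec' (f : n → Matrix n n ℂ) (v : n → ℂ) :
    (∑ j, f j) *ᵥ v = ∑ j, f j *ᵥ v := by
  ext a
  simp only [Matrix.mulVec, dotProduct, Matrix.sum_apply, Finset.sum_mul,
    Finset.sum_apply]
  exact Finset.sum_comm

lemma dotProduct_sum' (v : n → ℂ) (w : n → n → ℂ) :
    v ⬝ᵥ (∑ j, w j) = ∑ j, v ⬝ᵥ w j := by
  simp only [dotProduct, Finset.sum_apply, Finset.mul_sum]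
  exact Finset.sum_comm

lemma star_dot_conj (u v : n → ℂ) :
    star v ⬝ᵥ u = starRingEnd ℂ (star u ⬝ᵥ v) := by
  simp only [dotProduct, Pi.star_apply, map_sum, map_mul, RCLike.star_def,
    Complex.conj_conj]
  exact Finset.sum_congr rfl fun a _ => by ring

lemma scalar_id {l g A s : ℝ} (hl : 0 ≤ l) (hg : 0 ≤ g) (hA : 0 ≤ A) :
    (l * A) ^ (1 - s) * (g * A) ^ s = l ^ (1 - s) * g ^ s * A := by
  rw [Real.mul_rpow hl hA, Real.mul_rpow hg hA]
  have h1 : A ^ (1 - s) * A ^ s = A := by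
    rw [← Real.rpow_add' hA (by norm_num : (1 - s) + s ≠ 0)]
    norm_num
  calc l ^ (1 - s) * A ^ (1 - s) * (g ^ s * A ^ s)
      = l ^ (1 - s) * g ^ s * (A ^ (1 - s) * A ^ s) := by ring
    _ = _ := by rw [h1]

lemma mpow_eq_sum (A : Matrix n n ℂ) (hA : A.IsHermitian)
    (lam : n → ℝ) (x : n → n → ℂ)
    (hx : ∀ i j, star (x i) ⬝ᵥ x j = if i = j then 1 else 0)
    (hdec : A = ∑ i, (lam i : ℂ) • Matrix.vecMulVec (x i) (star (x i))) (t : ℝ) :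
    mpow A t = ∑ i, ((lam i ^ t : ℝ) : ℂ) • Matrix.vecMulVec (x i) (star (x i)) := by
  set V : Matrix n n ℂ := Matrix.of fun a i => x i a with hV
  have hV1 : star V * V = 1 := by
    ext i j
    have h := hx i j
    simp only [dotProduct, Pi.star_apply] at h
    simp only [Matrix.mul_apply, Matrix.star_apply, Matrix.of_apply, Matrix.one_apply, hV,
      RCLike.star_def]
    simpa using h
  have hV2 : V * star V = 1 := mul_eq_one_comm.mp hV1
  have hU1 : star (hA.eigenvectorUnitary : Matrix n n ℂ)
      * (hA.eigenvectorUnitary : Matrix n n ℂ) = 1 :=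
    Matrix.mem_unitaryGroup_iff'.mp (hA.eigenvectorUnitary).2
  have hU2 : (hA.eigenvectorUnitary : Matrix n n ℂ)
      * star (hA.eigenvectorUnitary : Matrix n n ℂ) = 1 :=
    Matrix.mem_unitaryGroup_iff.mp (hA.eigenvectorUnitary).2
  have hAV : A = V * Matrix.diagonal (fun i => (lam i : ℂ)) * star V := by
    rw [hdec, sum_smul_vecMulVec]
  have hAU : A = (hA.eigenvectorUnitary : Matrix n n ℂ)
      * Matrix.diagonal (fun i => ((hA.eigenvalues i : ℝ) : ℂ))
      * star (hA.eigenvectorUnitary : Matrix n n ℂ) := by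
    have := hA.spectral_theorem
    convert this using 3
    rw [Unitary.conjStarAlgAut_apply]; rfl
  have key := funCalc_indep (hA.eigenvectorUnitary : Matrix n n ℂ) V hU1 hU2 hV1 hV2
    hA.eigenvalues lam (hAU.symm.trans hAV) (fun a => ((a ^ t : ℝ) : ℂ))
  rw [mpow, dif_pos hA]
  rw [key, ← sum_smul_vecMulVec]


end NSHelpers

/-- `Tr[ρ^{1−s} σ^{s}] = Σ_{(i,j)} p(i,j)^{1−s} q(i,j)^{s}` for the Nussbaum–Szkola
distributions `p, q` of density operators `ρ, σ`, i.e. `φ(s|ρ‖σ) = φ(s|p‖q)`. -/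
theorem nussbaumSzkola_phi_eq {d : ℕ} (ρ σ : Matrix (Fin d) (Fin d) ℂ)
    (hρ : ρ.PosSemidef) (hρ1 : ρ.trace = 1)
    (hσ : σ.PosSemidef) (hσ1 : σ.trace = 1)
    (lam gam : Fin d → ℝ) (x y : Fin d → Fin d → ℂ)
    (hx : ∀ i j, star (x i) ⬝ᵥ x j = if i = j then 1 else 0)
    (hy : ∀ i j, star (y i) ⬝ᵥ y j = if i = j then 1 else 0)
    (hρdec : ρ = ∑ i, (lam i : ℂ) • Matrix.vecMulVec (x i) (star (x i)))
    (hσdec : σ = ∑ j, (gam j : ℂ) • Matrix.vecMulVec (y j) (star (y j)))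
    (p q : Fin d × Fin d → ℝ)
    (hp : ∀ ω, p ω = lam ω.1 * ‖star (x ω.1) ⬝ᵥ y ω.2‖ ^ 2)
    (hq : ∀ ω, q ω = gam ω.2 * ‖star (x ω.1) ⬝ᵥ y ω.2‖ ^ 2)
    (s : ℝ) :
    ((mpow ρ (1 - s)) * (mpow σ s)).trace
      = ((∑ ω, p ω ^ (1 - s) * q ω ^ s : ℝ) : ℂ) := by
  have hev : ∀ (A : Matrix (Fin d) (Fin d) ℂ) (c : Fin d → ℝ) (z : Fin d → Fin d → ℂ),
      (∀ i j, star (z i) ⬝ᵥ z j = if i = j then 1 else 0) →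
      A = ∑ i, (c i : ℂ) • Matrix.vecMulVec (z i) (star (z i)) →
      ∀ i, star (z i) ⬝ᵥ (A *ᵥ z i) = (c i : ℂ) := by
    intro A c z hz hdec i
    rw [hdec, sum_mulVec', dotProduct_sum']
    have h1 : ∀ j, star (z i) ⬝ᵥ (((c j : ℂ) • Matrix.vecMulVec (z j) (star (z j))) *ᵥ z i)
        = (c j : ℂ) * ((star (z j) ⬝ᵥ z i) * (star (z i) ⬝ᵥ z j)) := by
      intro j
      rw [Matrix.smul_mulVec, vecMulVec_mulVec']
      simp only [dotProduct_smul, smul_eq_mul]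
      try ring
    simp only [h1, hz]
    simp
  have hlam : ∀ i, 0 ≤ lam i := by
    intro i
    have h0 := hρ.dotProduct_mulVec_nonneg (x i)
    rw [hev ρ lam x hx hρdec i] at h0
    exact_mod_cast Complex.zero_le_real.mp h0
  have hgam : ∀ j, 0 ≤ gam j := by
    intro j
    have h0 := hσ.dotProduct_mulVec_nonneg (y j)
    rw [hev σ gam y hy hσdec j] at h0
    exact_mod_cast Complex.zero_le_real.mp h0
  rw [mpow_eq_sum ρ hρ.1 lam x hx hρdec (1 - s), mpow_eq_sum σ hσ.1 gam y hy hσdec s]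
  rw [Finset.sum_mul_sum]
  simp only [Matrix.trace_sum, smul_mul_assoc, mul_smul_comm, Matrix.trace_smul, smul_eq_mul,
    trace_vmv]
  have hRHS : ((∑ ω, p ω ^ (1 - s) * q ω ^ s : ℝ) : ℂ)
      = ∑ i, ∑ j, ((p (i, j) ^ (1 - s) * q (i, j) ^ s : ℝ) : ℂ) := by
    push_cast
    rw [Fintype.sum_prod_type]
  rw [hRHS]
  refine Finset.sum_congr rfl fun i _ => Finset.sum_congr rfl fun j _ => ?_
  rw [star_dot_conj (x i) (y j), Complex.mul_conj, hp, hq]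
  rw [scalar_id (hlam i) (hgam j) (by positivity : (0:ℝ) ≤ ‖star (x i) ⬝ᵥ y j‖ ^ 2)]
  rw [Complex.sq_norm]
  push_cast
  ring
end
end

section
/- Let ρ and σ be density operators on a finite-dimensional complex Hilbert space, and let p, q be the associated Nussbaum–Szkola distributions on the finite index set Ω. Then for any orthogonal projection T and any δ > 0, the error probabilities α[T] := Tr[ρ(I − T)] and β[T] := Tr[σT] satisfy α[T] + δ·β[T] ≥ (1/2)·Σ_{ω∈Ω} min{p(ω), δ·q(ω)}. -/
open scoped Matrix ComplexOrder
open Filter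

noncomputable section

/-- Parseval: for an orthonormal family `y` of `d` vectors in `ℂ^d`,
`∑ j, |⟨u, y j⟩|² = ‖u‖²` (as complex numbers). -/
lemma NS_parseval {d : ℕ} (y : Fin d → Fin d → ℂ)
    (hy : ∀ i j, star (y i) ⬝ᵥ y j = if i = j then 1 else 0) (u : Fin d → ℂ) :
    ∑ j, (Complex.normSq ((star u) ⬝ᵥ y j) : ℂ) = star u ⬝ᵥ u := by
  classical
  set Y : Matrix (Fin d) (Fin d) ℂ := Matrix.of (fun a j => y j a) with hYdef
  have hYY : Yᴴ * Y = 1 := by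
    ext i j
    simpa [Matrix.mul_apply, Matrix.conjTranspose_apply, Matrix.one_apply, hYdef,
      dotProduct] using hy i j
  have hYY' : Y * Yᴴ = 1 := mul_eq_one_comm.mp hYY
  set v : Fin d → ℂ := star u ᵥ* Y with hvdef
  have hv : ∀ j, star u ⬝ᵥ y j = v j := by
    intro j; simp [hvdef, Matrix.vecMul, hYdef, dotProduct]
  have h1 : ∑ j, (Complex.normSq ((star u) ⬝ᵥ y j) : ℂ) = star v ⬝ᵥ v := by
    simp only [hv, dotProduct, Pi.star_apply, Complex.normSq_eq_conj_mul_self,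
      RingHom.coe_comp]
    rfl
  rw [h1]
  have hsv : star v = Yᴴ *ᵥ u := by
    rw [hvdef, Matrix.star_vecMul, star_star]
  rw [hsv, dotProduct_comm, hvdef, Matrix.dotProduct_mulVec, Matrix.vecMul_vecMul,
    hYY', Matrix.vecMul_one]

/-- Real version of Parseval. -/
lemma NS_parseval_re {d : ℕ} (y : Fin d → Fin d → ℂ)
    (hy : ∀ i j, star (y i) ⬝ᵥ y j = if i = j then 1 else 0) (u : Fin d → ℂ) :
    ∑ j, Complex.normSq ((star u) ⬝ᵥ y j) = (star u ⬝ᵥ u).re := by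
  have := congrArg Complex.re (NS_parseval y hy u)
  simpa [Complex.re_sum] using this

/-- Flipped Parseval: summing over the orthonormal family in the first slot. -/
lemma NS_parseval_re' {d : ℕ} (x : Fin d → Fin d → ℂ)
    (hx : ∀ i j, star (x i) ⬝ᵥ x j = if i = j then 1 else 0) (v : Fin d → ℂ) :
    ∑ i, Complex.normSq (star (x i) ⬝ᵥ v) = (star v ⬝ᵥ v).re := by
  have h : ∀ i, Complex.normSq (star (x i) ⬝ᵥ v) = Complex.normSq (star v ⬝ᵥ x i) := by
    intro i
    rw [← Complex.normSq_conj]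
    congr 1
    simp [dotProduct, map_sum, mul_comm]
  simp only [h]
  exact NS_parseval_re x hx v

lemma NS_vecMulVec_mulVec {d : ℕ} (u v w : Fin d → ℂ) :
    Matrix.vecMulVec u v *ᵥ w = (v ⬝ᵥ w) • u := by
  ext a
  simp only [Matrix.mulVec, Matrix.vecMulVec_apply, dotProduct, Pi.smul_apply,
    smul_eq_mul, Finset.sum_mul]
  exact Finset.sum_congr rfl fun b _ => by ring

/-- Trace formula: `Tr[(∑ λᵢ xᵢxᵢᴴ) M] = ∑ λᵢ ⟨xᵢ, M xᵢ⟩`. -/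
lemma NS_trace_formula {d : ℕ} (lam : Fin d → ℝ) (x : Fin d → Fin d → ℂ)
    (M : Matrix (Fin d) (Fin d) ℂ) :
    ((∑ i, (lam i : ℂ) • Matrix.vecMulVec (x i) (star (x i))) * M).trace
      = ∑ i, (lam i : ℂ) * (star (x i) ⬝ᵥ (M *ᵥ x i)) := by
  rw [Finset.sum_mul, Matrix.trace_sum]
  congr 1; ext i
  rw [Matrix.smul_mul, Matrix.trace_smul, smul_eq_mul]
  congr 1
  simp only [Matrix.trace, Matrix.diag_apply, Matrix.mul_apply, Matrix.vecMulVec_apply,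
    dotProduct, Matrix.mulVec, Pi.star_apply]
  rw [Finset.sum_comm]
  congr 1; ext b
  rw [Finset.mul_sum]
  congr 1; ext a
  ring

/-- The eigenvalue identity `⟨xᵢ, ρ xᵢ⟩ = λᵢ` for an orthonormal decomposition. -/
lemma NS_eigen {d : ℕ} (lam : Fin d → ℝ) (x : Fin d → Fin d → ℂ)
    (hx : ∀ i j, star (x i) ⬝ᵥ x j = if i = j then 1 else 0) (i : Fin d) :
    star (x i) ⬝ᵥ ((∑ k, (lam k : ℂ) • Matrix.vecMulVec (x k) (star (x k))) *ᵥ x i)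
      = (lam i : ℂ) := by
  classical
  have hs : (∑ k, (lam k : ℂ) • Matrix.vecMulVec (x k) (star (x k))) *ᵥ x i
      = ∑ k, ((lam k : ℂ) • Matrix.vecMulVec (x k) (star (x k))) *ᵥ x i := by
    ext a
    simp only [Matrix.mulVec, dotProduct, Matrix.sum_apply, Finset.sum_apply,
      Finset.sum_mul]
    exact Finset.sum_comm
  rw [hs]
  have hd : ∀ (w : Fin d → Fin d → ℂ),
      star (x i) ⬝ᵥ (∑ k, w k) = ∑ k, star (x i) ⬝ᵥ w k := by
    intro w
    simp only [dotProduct, Finset.sum_apply, Finset.mul_sum]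
    exact Finset.sum_comm
  rw [hd]
  simp only [Matrix.smul_mulVec, NS_vecMulVec_mulVec, dotProduct_smul,
    smul_eq_mul, smul_smul]
  have : ∀ k, star (x k) ⬝ᵥ x i = if k = i then 1 else 0 := fun k => hx k i
  simp only [this]
  rw [Finset.sum_eq_single i]
  · simp [hx i i]
  · intro k _ hk; simp [hk]
  · intro h; simp at h

/-- Weighted Nussbaum–Szkola inequality: for any orthogonal projection `T` and `δ > 0`,
`α[T] + δ·β[T] ≥ (1/2)·Σ_ω min{p(ω), δ·q(ω)}`. -/
theorem nussbaumSzkola_ineq_weighted {d : ℕ} (ρ σ : Matrix (Fin d) (Fin d) ℂ)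
    (hρ : ρ.PosSemidef) (hρ1 : ρ.trace = 1)
    (hσ : σ.PosSemidef) (hσ1 : σ.trace = 1)
    (lam gam : Fin d → ℝ) (x y : Fin d → Fin d → ℂ)
    (hx : ∀ i j, star (x i) ⬝ᵥ x j = if i = j then 1 else 0)
    (hy : ∀ i j, star (y i) ⬝ᵥ y j = if i = j then 1 else 0)
    (hρdec : ρ = ∑ i, (lam i : ℂ) • Matrix.vecMulVec (x i) (star (x i)))
    (hσdec : σ = ∑ j, (gam j : ℂ) • Matrix.vecMulVec (y j) (star (y j)))
    (p q : Fin d × Fin d → ℝ)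
    (hp : ∀ ω, p ω = lam ω.1 * ‖star (x ω.1) ⬝ᵥ y ω.2‖ ^ 2)
    (hq : ∀ ω, q ω = gam ω.2 * ‖star (x ω.1) ⬝ᵥ y ω.2‖ ^ 2)
    (T : Matrix (Fin d) (Fin d) ℂ) (hT : T.IsHermitian) (hTproj : T * T = T)
    (δ : ℝ) (hδ : 0 < δ) :
    (1 / 2) * ∑ ω, min (p ω) (δ * q ω)
      ≤ ((ρ * (1 - T)).trace).re + δ * ((σ * T).trace).re := by
  classical
  set B : Matrix (Fin d) (Fin d) ℂ := 1 - T with hBdef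
  have hTH : Tᴴ = T := hT
  have hBH : Bᴴ = B := by
    rw [hBdef, Matrix.conjTranspose_sub, Matrix.conjTranspose_one, hTH]
  have hBB : B * B = B := by
    rw [hBdef, sub_mul, one_mul, mul_sub, mul_one, hTproj, sub_self, sub_zero]
  -- inner product manipulations for Hermitian idempotents
  have hmove : ∀ (P : Matrix (Fin d) (Fin d) ℂ), Pᴴ = P → ∀ u w,
      star u ⬝ᵥ (P *ᵥ w) = star (P *ᵥ u) ⬝ᵥ w := by
    intro P hP u w
    rw [Matrix.star_mulVec, hP, ← Matrix.dotProduct_mulVec]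
  have hidem : ∀ (P : Matrix (Fin d) (Fin d) ℂ), Pᴴ = P → P * P = P → ∀ v,
      star (P *ᵥ v) ⬝ᵥ (P *ᵥ v) = star v ⬝ᵥ (P *ᵥ v) := by
    intro P hP hPP v
    rw [← hmove P hP, Matrix.mulVec_mulVec, hPP]
  -- nonnegativity of the spectral coefficients
  have hlam : ∀ i, 0 ≤ lam i := by
    intro i
    have h1 := hρ.dotProduct_mulVec_nonneg (x i)
    have h2 := NS_eigen lam x hx i
    rw [← hρdec] at h2
    rw [h2] at h1
    exact Complex.zero_le_real.mp h1
  have hgam : ∀ j, 0 ≤ gam j := by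
    intro j
    have h1 := hσ.dotProduct_mulVec_nonneg (y j)
    have h2 := NS_eigen gam y hy j
    rw [← hσdec] at h2
    rw [h2] at h1
    exact Complex.zero_le_real.mp h1
  -- decomposition of the inner product
  have hsplit : ∀ i j, star (x i) ⬝ᵥ y j
      = star (x i) ⬝ᵥ (B *ᵥ y j) + star (x i) ⬝ᵥ (T *ᵥ y j) := by
    intro i j
    have hw : B *ᵥ y j + T *ᵥ y j = y j := by
      rw [hBdef, Matrix.sub_mulVec, Matrix.one_mulVec, sub_add_cancel]
    conv_lhs => rw [← hw]
    rw [dotProduct_add]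
  -- elementary real inequalities
  have hns : ∀ c1 c2 : ℂ, Complex.normSq (c1 + c2)
      ≤ 2 * Complex.normSq c1 + 2 * Complex.normSq c2 := by
    intro c1 c2
    simp only [Complex.normSq_apply, Complex.add_re, Complex.add_im]
    nlinarith [sq_nonneg (c1.re - c2.re), sq_nonneg (c1.im - c2.im)]
  have hmin : ∀ a b n n1 n2 : ℝ, 0 ≤ a → 0 ≤ b → 0 ≤ n1 → 0 ≤ n2 →
      n ≤ 2 * n1 + 2 * n2 → min (a * n) (b * n) ≤ 2 * (a * n1) + 2 * (b * n2) := by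
    intro a b n n1 n2 ha hb h1 h2 hn
    rcases le_total a b with hab | hab
    · have h3 : min (a * n) (b * n) ≤ a * n := min_le_left _ _
      nlinarith
    · have h3 : min (a * n) (b * n) ≤ b * n := min_le_right _ _
      nlinarith
  -- key pointwise bound
  have key : ∀ i j, min (p (i, j)) (δ * q (i, j))
      ≤ 2 * (lam i * Complex.normSq (star (x i) ⬝ᵥ (B *ᵥ y j)))
        + 2 * (δ * gam j * Complex.normSq (star (x i) ⬝ᵥ (T *ᵥ y j))) := by
    intro i j
    have hpij : p (i, j) = lam i * Complex.normSq (star (x i) ⬝ᵥ y j) := by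
      rw [hp (i, j), Complex.sq_norm]
    have hqij : δ * q (i, j) = (δ * gam j) * Complex.normSq (star (x i) ⬝ᵥ y j) := by
      rw [hq (i, j), Complex.sq_norm]; ring
    rw [hpij, hqij, hsplit i j]
    exact hmin (lam i) (δ * gam j) _ _ _ (hlam i) (mul_nonneg hδ.le (hgam j))
      (Complex.normSq_nonneg _) (Complex.normSq_nonneg _) (hns _ _)
  -- Parseval collapses
  have hS1 : ∀ i, ∑ j, Complex.normSq (star (x i) ⬝ᵥ (B *ᵥ y j))
      = (star (x i) ⬝ᵥ (B *ᵥ x i)).re := by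
    intro i
    have h1 : ∀ j, star (x i) ⬝ᵥ (B *ᵥ y j) = star (B *ᵥ x i) ⬝ᵥ y j :=
      fun j => hmove B hBH (x i) (y j)
    simp only [h1]
    rw [NS_parseval_re y hy (B *ᵥ x i)]
    exact congrArg Complex.re (hidem B hBH hBB (x i))
  have hS2 : ∀ j, ∑ i, Complex.normSq (star (x i) ⬝ᵥ (T *ᵥ y j))
      = (star (y j) ⬝ᵥ (T *ᵥ y j)).re := by
    intro j
    rw [NS_parseval_re' x hx (T *ᵥ y j)]
    exact congrArg Complex.re (hidem T hTH hTproj (y j))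
  -- trace formulas
  have hα : ((ρ * B).trace).re = ∑ i, lam i * (star (x i) ⬝ᵥ (B *ᵥ x i)).re := by
    rw [hρdec, NS_trace_formula, Complex.re_sum]
    exact Finset.sum_congr rfl fun i _ => Complex.re_ofReal_mul _ _
  have hβ : ((σ * T).trace).re = ∑ j, gam j * (star (y j) ⬝ᵥ (T *ᵥ y j)).re := by
    rw [hσdec, NS_trace_formula, Complex.re_sum]
    exact Finset.sum_congr rfl fun j _ => Complex.re_ofReal_mul _ _
  -- assemble
  have hsum : ∑ ω : Fin d × Fin d, min (p ω) (δ * q ω)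
      ≤ 2 * ((ρ * B).trace).re + 2 * (δ * ((σ * T).trace).re) := by
    rw [Fintype.sum_prod_type]
    have step1 : ∑ i, ∑ j, min (p (i, j)) (δ * q (i, j))
        ≤ ∑ i, ∑ j, (2 * (lam i * Complex.normSq (star (x i) ⬝ᵥ (B *ᵥ y j)))
          + 2 * (δ * gam j * Complex.normSq (star (x i) ⬝ᵥ (T *ᵥ y j)))) :=
      Finset.sum_le_sum fun i _ => Finset.sum_le_sum fun j _ => key i j
    refine le_trans step1 (le_of_eq ?_)
    have esum : ∀ i, ∑ j, (2 * (lam i * Complex.normSq (star (x i) ⬝ᵥ (B *ᵥ y j)))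
          + 2 * (δ * gam j * Complex.normSq (star (x i) ⬝ᵥ (T *ᵥ y j))))
        = (∑ j, 2 * (lam i * Complex.normSq (star (x i) ⬝ᵥ (B *ᵥ y j))))
          + ∑ j, 2 * (δ * gam j * Complex.normSq (star (x i) ⬝ᵥ (T *ᵥ y j))) :=
      fun i => Finset.sum_add_distrib
    simp only [esum]
    rw [Finset.sum_add_distrib]
    have part1 : ∑ i, ∑ j, 2 * (lam i * Complex.normSq (star (x i) ⬝ᵥ (B *ᵥ y j)))
        = 2 * ((ρ * B).trace).re := by
      rw [hα, Finset.mul_sum]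
      refine Finset.sum_congr rfl fun i _ => ?_
      rw [← hS1 i, Finset.mul_sum, Finset.mul_sum]
    have part2 : ∑ i, ∑ j, 2 * (δ * gam j * Complex.normSq (star (x i) ⬝ᵥ (T *ᵥ y j)))
        = 2 * (δ * ((σ * T).trace).re) := by
      rw [Finset.sum_comm, hβ, Finset.mul_sum, Finset.mul_sum]
      refine Finset.sum_congr rfl fun j _ => ?_
      rw [← hS2 j, Finset.mul_sum, Finset.mul_sum, Finset.mul_sum]
      refine Finset.sum_congr rfl fun i _ => ?_
      ring
    rw [part1, part2]
  linarith
end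
end

section
/- Let ρ and σ be density operators on a finite-dimensional complex Hilbert space and δ > 0. Then the minimum over all tests 0 ≤ T ≤ I of α[T] + δ·β[T], where α[T] := Tr[ρ(I − T)] and β[T] := Tr[σT], is attained by the orthogonal projection {ρ − δσ > 0} onto the linear subspace spanned by the eigenvectors of ρ − δσ corresponding to positive eigenvalues; that is, for every test 0 ≤ T ≤ I, α[{ρ − δσ > 0}] + δ·β[{ρ − δσ > 0}] ≤ α[T] + δ·β[T]. -/
open scoped Matrix ComplexOrder
open Filter

noncomputable section

lemma psd_diag_re_nonneg {n : Type*} [Fintype n] [DecidableEq n] {S : Matrix n n ℂ}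
    (hS : S.PosSemidef) (i : n) : 0 ≤ (S i i).re := by
  have h := hS.dotProduct_mulVec_nonneg (Pi.single i 1)
  have : (dotProduct (star (Pi.single i 1)) (S *ᵥ Pi.single i 1)) = S i i := by
    simp [dotProduct, Matrix.mulVec, Pi.single_apply, Finset.mul_sum]
  rw [this] at h
  exact (Complex.nonneg_iff.mp h).1

lemma tr_diag_mul {n : Type*} [Fintype n] [DecidableEq n] (f : n → ℂ) (S : Matrix n n ℂ) :
    (Matrix.diagonal f * S).trace = ∑ i, f i * S i i := by
  simp [Matrix.trace, Matrix.diag, Matrix.diagonal_mul]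

lemma key_hh {n : Type*} [Fintype n] [DecidableEq n] {A : Matrix n n ℂ} (hA : A.IsHermitian)
    {T : Matrix n n ℂ} (hT : T.PosSemidef) (hT' : (1 - T).PosSemidef) :
    ((A * T).trace).re ≤ ((A * posProj A).trace).re := by
  set U : Matrix n n ℂ := (Matrix.IsHermitian.eigenvectorUnitary hA : Matrix n n ℂ) with hUdef
  have hU1 : star U * U = 1 := (Matrix.IsHermitian.eigenvectorUnitary hA).2.1
  set lam : n → ℝ := hA.eigenvalues with hlam
  set D : Matrix n n ℂ := Matrix.diagonal (fun i => (lam i : ℂ)) with hD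
  have hspec : A = U * D * star U := by
    have := hA.spectral_theorem; rw [Function.comp_def] at this; exact this
  set S : Matrix n n ℂ := star U * T * U with hS
  have hSpsd : S.PosSemidef := hT.conjTranspose_mul_mul_same U
  have hSpsd' : (1 - S).PosSemidef := by
    have h2 := hT'.conjTranspose_mul_mul_same U
    have e : Uᴴ * (1 - T) * U = 1 - S := by
      rw [Matrix.mul_sub, Matrix.mul_one, Matrix.sub_mul]
      congr 1
    rwa [e] at h2
  have htrT : (A * T).trace = ∑ i, (lam i : ℂ) * S i i := by
    rw [hspec]
    calc (U * D * star U * T).trace = (U * (D * (star U * T))).trace := by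
          rw [Matrix.mul_assoc, Matrix.mul_assoc]
      _ = ((D * (star U * T)) * U).trace := Matrix.trace_mul_comm _ _
      _ = (D * S).trace := by rw [Matrix.mul_assoc, hS, Matrix.mul_assoc]
      _ = ∑ i, (lam i : ℂ) * S i i := tr_diag_mul _ _
  have hP : posProj A = U * Matrix.diagonal (fun i => if 0 < lam i then (1:ℂ) else 0) * star U := by
    rw [posProj, dif_pos hA]
  have htrP : (A * posProj A).trace = ∑ i, (lam i : ℂ) * (if 0 < lam i then (1:ℂ) else 0) := by
    rw [hP, hspec]
    have : U * D * star U * (U * Matrix.diagonal (fun i => if 0 < lam i then (1:ℂ) else 0) * star U)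
        = U * (D * Matrix.diagonal (fun i => if 0 < lam i then (1:ℂ) else 0)) * star U := by
      simp only [Matrix.mul_assoc]
      rw [← Matrix.mul_assoc (star U) U, hU1, Matrix.one_mul]
    rw [this, Matrix.mul_assoc, Matrix.trace_mul_comm, Matrix.mul_assoc, hU1, Matrix.mul_one,
      tr_diag_mul]
    simp [Matrix.diagonal_apply_eq]
  rw [htrT, htrP, Complex.re_sum, Complex.re_sum]
  apply Finset.sum_le_sum
  intro i _
  have h0 : 0 ≤ (S i i).re := psd_diag_re_nonneg hSpsd i
  have h1 : (S i i).re ≤ 1 := by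
    have := psd_diag_re_nonneg hSpsd' i
    simp only [Matrix.sub_apply, Matrix.one_apply_eq, Complex.sub_re, Complex.one_re] at this
    linarith
  have hre : ((lam i : ℂ) * S i i).re = lam i * (S i i).re := by
    simp [Complex.mul_re]
  rw [hre]
  by_cases hpos : 0 < lam i
  · simp only [hpos, if_pos]
    simpa using mul_le_mul_of_nonneg_left h1 hpos.le
  · simp only [hpos, if_neg, mul_zero]
    push_neg at hpos
    norm_num
    exact mul_nonpos_of_nonpos_of_nonneg hpos h0

/-- Holevo–Helstrom optimality: the projection `{ρ − δσ > 0}` minimizes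
`α[T] + δ·β[T]` over all tests `0 ≤ T ≤ I`. -/
theorem holevo_helstrom_optimal {d : ℕ} (ρ σ : Matrix (Fin d) (Fin d) ℂ)
    (hρ : ρ.PosSemidef) (hρ1 : ρ.trace = 1)
    (hσ : σ.PosSemidef) (hσ1 : σ.trace = 1)
    (δ : ℝ) (hδ : 0 < δ)
    (T : Matrix (Fin d) (Fin d) ℂ) (hT : T.PosSemidef) (hT' : (1 - T).PosSemidef) :
    ((ρ * (1 - posProj (ρ - (δ : ℂ) • σ))).trace).re
        + δ * ((σ * posProj (ρ - (δ : ℂ) • σ)).trace).re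
      ≤ ((ρ * (1 - T)).trace).re + δ * ((σ * T).trace).re := by
  set A : Matrix (Fin d) (Fin d) ℂ := ρ - (δ : ℂ) • σ with hAdef
  have hA : A.IsHermitian := by
    have hs : ((δ : ℂ) • σ).IsHermitian := by
      show ((δ : ℂ) • σ)ᴴ = (δ : ℂ) • σ
      rw [Matrix.conjTranspose_smul, hσ.1.eq]
      congr 1
      simp [Complex.star_def, Complex.conj_ofReal]
    exact hρ.1.sub hs
  have e1 : ∀ W : Matrix (Fin d) (Fin d) ℂ,
      ((A * W).trace).re = ((ρ * W).trace).re - δ * ((σ * W).trace).re := by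
    intro W
    have h : A * W = ρ * W - (δ : ℂ) • (σ * W) := by
      rw [hAdef, Matrix.sub_mul, Matrix.smul_mul]
    rw [h, Matrix.trace_sub, Matrix.trace_smul]
    simp [Complex.sub_re, smul_eq_mul, Complex.mul_re]
  have e2 : ∀ W : Matrix (Fin d) (Fin d) ℂ,
      ((ρ * (1 - W)).trace).re = 1 - ((ρ * W).trace).re := by
    intro W
    rw [Matrix.mul_sub, Matrix.mul_one, Matrix.trace_sub, hρ1]
    simp [Complex.sub_re]
  have hkey := key_hh hA hT hT'
  have hP : posProj A = posProj (ρ - (δ : ℂ) • σ) := by rw [hAdef]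
  rw [← hP, e2, e2]
  have h1 := e1 T
  have h2 := e1 (posProj A)
  linarith
end
end

section
/- Let ρ and σ be density operators on a finite-dimensional complex Hilbert space, and let p, q be the associated Nussbaum–Szkola distributions on the finite index set Ω. Then for any test 0 ≤ T ≤ I and any δ > 0, the error probabilities α[T] := Tr[ρ(I − T)] and β[T] := Tr[σT] satisfy α[T] + δ·β[T] ≥ (1/2)·[ p{p ≤ δq} + δ·q{p > δq} ], where p{p ≤ δq} := Σ_{ω : p(ω) ≤ δq(ω)} p(ω) and q{p > δq} := Σ_{ω : p(ω) > δq(ω)} q(ω). -/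
open scoped Matrix ComplexOrder
open Filter

noncomputable section

variable {d : ℕ}

/-- trace of (c • |u⟩⟨u|) * M -/
lemma NShelper.trace_smul_vecMulVec (c : ℂ) (u : Fin d → ℂ) (M : Matrix (Fin d) (Fin d) ℂ) :
    ((c • Matrix.vecMulVec u (star u)) * M).trace = c * (star u ⬝ᵥ (M *ᵥ u)) := by
  simp only [Matrix.trace, Matrix.diag, Matrix.mul_apply, Matrix.smul_apply,
    Matrix.vecMulVec_apply, dotProduct, Matrix.mulVec, Pi.star_apply, smul_eq_mul,
    Finset.mul_sum]
  rw [Finset.sum_comm]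
  exact Finset.sum_congr rfl fun j _ => Finset.sum_congr rfl fun i _ => by ring

/-- conjugate swap for dot products -/
lemma NShelper.star_dot (v w : Fin d → ℂ) :
    star (star v ⬝ᵥ w) = star w ⬝ᵥ v := by
  simp only [dotProduct, star_sum, star_mul', Pi.star_apply, star_star]
  exact Finset.sum_congr rfl fun i _ => by ring

/-- completeness of an orthonormal family of d vectors in dimension d -/
lemma NShelper.complete (y : Fin d → Fin d → ℂ)
    (hy : ∀ i j, star (y i) ⬝ᵥ y j = if i = j then 1 else 0) (k l : Fin d) :
    ∑ j, y j k * star (y j l) = if k = l then 1 else 0 := by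
  classical
  set U : Matrix (Fin d) (Fin d) ℂ := Matrix.of (fun k j => y j k) with hU
  have h1 : Uᴴ * U = 1 := by
    ext i j
    have := hy i j
    simpa [U, Matrix.mul_apply, Matrix.conjTranspose_apply, dotProduct,
      Matrix.one_apply] using this
  have h2 : U * Uᴴ = 1 := mul_eq_one_comm.mp h1
  have := congrArg (fun M => M k l) h2
  simpa [U, Matrix.mul_apply, Matrix.conjTranspose_apply, Matrix.one_apply] using this

/-- Parseval: sum over ONB of |⟨w, y j⟩|² equals ‖w‖². -/
lemma NShelper.parseval (y : Fin d → Fin d → ℂ)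
    (hy : ∀ i j, star (y i) ⬝ᵥ y j = if i = j then 1 else 0) (w : Fin d → ℂ) :
    ∑ j, ‖star w ⬝ᵥ y j‖ ^ 2 = (star w ⬝ᵥ w).re := by
  classical
  have key : ∑ j, (star w ⬝ᵥ y j) * star (star w ⬝ᵥ y j) = star w ⬝ᵥ w := by
    have expand : ∀ j, (star w ⬝ᵥ y j) * star (star w ⬝ᵥ y j)
        = ∑ k, ∑ l, star (w k) * w l * (y j k * star (y j l)) := by
      intro j
      simp only [dotProduct, star_sum, star_mul', Pi.star_apply, star_star,
        Finset.sum_mul, Finset.mul_sum]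
      rw [Finset.sum_comm]
      exact Finset.sum_congr rfl fun k _ => Finset.sum_congr rfl fun l _ => by ring
    rw [Finset.sum_congr rfl fun j _ => expand j]
    rw [Finset.sum_comm]
    have : ∀ k, ∑ j, ∑ l, star (w k) * w l * (y j k * star (y j l))
        = star (w k) * w k := by
      intro k
      rw [Finset.sum_comm]
      have : ∀ l, ∑ j, star (w k) * w l * (y j k * star (y j l))
          = star (w k) * w l * (if k = l then 1 else 0) := by
        intro l
        rw [← Finset.mul_sum, NShelper.complete y hy k l]
      rw [Finset.sum_congr rfl fun l _ => this l]
      simp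
    rw [Finset.sum_congr rfl fun k _ => this k]
    rfl
  have habs : ∀ z : ℂ, (‖z‖ : ℝ) ^ 2 = (z * star z).re := by
    intro z
    rw [Complex.sq_norm, Complex.star_def, Complex.mul_conj]
    simp
  rw [Finset.sum_congr rfl fun j _ => habs _, ← Complex.re_sum, key]

lemma NShelper.sub_sq_posSemidef {M : Matrix (Fin d) (Fin d) ℂ}
    (hM : M.PosSemidef) (h1M : (1 - M).PosSemidef) : (M - M * M).PosSemidef := by
  have e : M - M * M = M * (1 - M) * Mᴴ + (1 - M) * M * (1 - M)ᴴ := by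
    rw [hM.isHermitian.eq, h1M.isHermitian.eq]; noncomm_ring
  rw [e]; exact (h1M.mul_mul_conjTranspose_same M).add (hM.mul_mul_conjTranspose_same (1 - M))

/-- key inequality: for 0 ≤ M ≤ 1 and orthonormal basis y,
    Σ_j |⟨u, M y_j⟩|² ≤ re ⟨u, M u⟩. -/
lemma NShelper.key {M : Matrix (Fin d) (Fin d) ℂ}
    (hM : M.PosSemidef) (h1M : (1 - M).PosSemidef)
    (y : Fin d → Fin d → ℂ)
    (hy : ∀ i j, star (y i) ⬝ᵥ y j = if i = j then 1 else 0) (u : Fin d → ℂ) :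
    ∑ j, ‖star u ⬝ᵥ (M *ᵥ y j)‖ ^ 2 ≤ (star u ⬝ᵥ (M *ᵥ u)).re := by
  set w : Fin d → ℂ := M *ᵥ u with hw
  have hherm : Mᴴ = M := hM.isHermitian.eq
  have hshift : ∀ v : Fin d → ℂ, star u ⬝ᵥ (M *ᵥ v) = star w ⬝ᵥ v := by
    intro v
    rw [Matrix.dotProduct_mulVec, hw, Matrix.star_mulVec, hherm]
  have h1 : ∑ j, ‖star u ⬝ᵥ (M *ᵥ y j)‖ ^ 2 = (star u ⬝ᵥ ((M * M) *ᵥ u)).re := by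
    rw [Finset.sum_congr rfl fun j _ => by rw [hshift (y j)]]
    rw [NShelper.parseval y hy w]
    have e2 : (M * M) *ᵥ u = M *ᵥ w := by rw [hw, Matrix.mulVec_mulVec]
    rw [e2, hshift w]
  rw [h1]
  have hps := NShelper.sub_sq_posSemidef hM h1M
  have := (Complex.nonneg_iff.mp (hps.dotProduct_mulVec_nonneg u)).1
  simp only [RCLike.re_to_complex, Matrix.sub_mulVec, sub_dotProduct,
    dotProduct_sub, Complex.sub_re] at this
  linarith

lemma NShelper.eigen_vec (lam : Fin d → ℝ) (x : Fin d → Fin d → ℂ)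
    (hx : ∀ i j, star (x i) ⬝ᵥ x j = if i = j then 1 else 0)
    (ρ : Matrix (Fin d) (Fin d) ℂ)
    (hρdec : ρ = ∑ i, (lam i : ℂ) • Matrix.vecMulVec (x i) (star (x i))) (i : Fin d) :
    ρ *ᵥ x i = (lam i : ℂ) • x i := by
  funext k
  simp only [hρdec, Matrix.mulVec, dotProduct, Matrix.sum_apply, Matrix.smul_apply,
    Matrix.vecMulVec_apply, Pi.star_apply, smul_eq_mul, Finset.sum_mul, Pi.smul_apply]
  rw [Finset.sum_comm]
  have hterm : ∀ m, (∑ l, (lam m : ℂ) * (x m k * star (x m l)) * x i l)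
      = (lam m : ℂ) * x m k * (star (x m) ⬝ᵥ x i) := by
    intro m
    simp only [dotProduct, Finset.mul_sum, Pi.star_apply]
    exact Finset.sum_congr rfl fun l _ => by ring
  rw [Finset.sum_congr rfl fun m _ => hterm m]
  rw [Finset.sum_congr rfl fun m _ => by rw [hx m i]]
  simp

lemma NShelper.eigen_nonneg (lam : Fin d → ℝ) (x : Fin d → Fin d → ℂ)
    (hx : ∀ i j, star (x i) ⬝ᵥ x j = if i = j then 1 else 0)
    (ρ : Matrix (Fin d) (Fin d) ℂ) (hρ : ρ.PosSemidef)
    (hρdec : ρ = ∑ i, (lam i : ℂ) • Matrix.vecMulVec (x i) (star (x i))) (i : Fin d) :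
    0 ≤ lam i := by
  have h := hρ.dotProduct_mulVec_nonneg (x i)
  rw [NShelper.eigen_vec lam x hx ρ hρdec i, dotProduct_smul, hx i i] at h
  simp at h
  exact_mod_cast h

lemma NShelper.trace_formula (lam : Fin d → ℝ) (x : Fin d → Fin d → ℂ)
    (ρ M : Matrix (Fin d) (Fin d) ℂ)
    (hρdec : ρ = ∑ i, (lam i : ℂ) • Matrix.vecMulVec (x i) (star (x i))) :
    ((ρ * M).trace).re = ∑ i, lam i * (star (x i) ⬝ᵥ (M *ᵥ x i)).re := by
  rw [hρdec, Finset.sum_mul, Matrix.trace_sum]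
  rw [Finset.sum_congr rfl fun i _ => NShelper.trace_smul_vecMulVec (lam i : ℂ) (x i) M]
  rw [Complex.re_sum]
  exact Finset.sum_congr rfl fun i _ => by
    rw [Complex.re_ofReal_mul]

lemma NShelper.pointwise (lam gam δ : ℝ) (hl : 0 ≤ lam) (hg : 0 ≤ gam) (hδ : 0 ≤ δ)
    (a b : ℂ) :
    (1/2) * min (lam * ‖a + b‖ ^ 2) (δ * (gam * ‖a + b‖ ^ 2))
      ≤ lam * ‖a‖ ^ 2 + δ * (gam * ‖b‖ ^ 2) := by
  have hc : (0:ℝ) ≤ ‖a + b‖ ^ 2 := by positivity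
  have hmin : min (lam * ‖a + b‖ ^ 2) (δ * (gam * ‖a + b‖ ^ 2))
      = min lam (δ * gam) * ‖a + b‖ ^ 2 := by
    rw [min_mul_of_nonneg _ _ hc, mul_assoc]
  rw [hmin]
  set m := min lam (δ * gam) with hm
  have h1 : m ≤ lam := min_le_left _ _
  have h2 : m ≤ δ * gam := min_le_right _ _
  have h0 : 0 ≤ m := le_min hl (mul_nonneg hδ hg)
  have habs : ‖a + b‖ ≤ ‖a‖ + ‖b‖ := norm_add_le a b
  have ha : (0:ℝ) ≤ ‖a‖ := norm_nonneg a
  have hb : (0:ℝ) ≤ ‖b‖ := norm_nonneg b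
  have hab : (0:ℝ) ≤ ‖a+b‖ := norm_nonneg _
  nlinarith [sq_nonneg (‖a‖ - ‖b‖), sq_nonneg (‖a‖ + ‖b‖),
    mul_le_mul_of_nonneg_left (pow_le_pow_left₀ hab habs 2) h0,
    mul_le_mul_of_nonneg_right h1 (sq_nonneg (‖a‖)),
    mul_le_mul_of_nonneg_right h2 (sq_nonneg (‖b‖))]

/-- The paper's Lemma: for any test `0 ≤ T ≤ I` and any `δ > 0`,
`α[T] + δ·β[T] ≥ (1/2)·[p{p ≤ δq} + δ·q{p > δq}]`. -/
theorem lemma_main_ineq {d : ℕ} (ρ σ : Matrix (Fin d) (Fin d) ℂ)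
    (hρ : ρ.PosSemidef) (hρ1 : ρ.trace = 1)
    (hσ : σ.PosSemidef) (hσ1 : σ.trace = 1)
    (lam gam : Fin d → ℝ) (x y : Fin d → Fin d → ℂ)
    (hx : ∀ i j, star (x i) ⬝ᵥ x j = if i = j then 1 else 0)
    (hy : ∀ i j, star (y i) ⬝ᵥ y j = if i = j then 1 else 0)
    (hρdec : ρ = ∑ i, (lam i : ℂ) • Matrix.vecMulVec (x i) (star (x i)))
    (hσdec : σ = ∑ j, (gam j : ℂ) • Matrix.vecMulVec (y j) (star (y j)))
    (p q : Fin d × Fin d → ℝ)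
    (hp : ∀ ω, p ω = lam ω.1 * ‖star (x ω.1) ⬝ᵥ y ω.2‖ ^ 2)
    (hq : ∀ ω, q ω = gam ω.2 * ‖star (x ω.1) ⬝ᵥ y ω.2‖ ^ 2)
    (T : Matrix (Fin d) (Fin d) ℂ) (hT : T.PosSemidef) (hT' : (1 - T).PosSemidef)
    (δ : ℝ) (hδ : 0 < δ) :
    (1 / 2) * ((∑ ω ∈ Finset.univ.filter (fun ω => p ω ≤ δ * q ω), p ω)
        + δ * (∑ ω ∈ Finset.univ.filter (fun ω => δ * q ω < p ω), q ω))
      ≤ ((ρ * (1 - T)).trace).re + δ * ((σ * T).trace).re := by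
  classical
  have hlam : ∀ i, 0 ≤ lam i := NShelper.eigen_nonneg lam x hx ρ hρ hρdec
  have hgam : ∀ j, 0 ≤ gam j := NShelper.eigen_nonneg gam y hy σ hσ hσdec
  have h1S : (1 - (1 - T)).PosSemidef := by rw [sub_sub_cancel]; exact hT
  -- α bound
  have hα : ∑ i, lam i * ∑ j, ‖star (x i) ⬝ᵥ ((1 - T) *ᵥ y j)‖ ^ 2
      ≤ ((ρ * (1 - T)).trace).re := by
    rw [NShelper.trace_formula lam x ρ (1 - T) hρdec]
    refine Finset.sum_le_sum fun i _ => mul_le_mul_of_nonneg_left ?_ (hlam i)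
    exact NShelper.key hT' h1S y hy (x i)
  -- β bound
  have hβ : ∑ j, gam j * ∑ i, ‖star (y j) ⬝ᵥ (T *ᵥ x i)‖ ^ 2
      ≤ ((σ * T).trace).re := by
    rw [NShelper.trace_formula gam y σ T hσdec]
    refine Finset.sum_le_sum fun j _ => mul_le_mul_of_nonneg_left ?_ (hgam j)
    exact NShelper.key hT hT' x hx (y j)
  -- flip abs for β terms
  have habsflip : ∀ i j, ‖star (y j) ⬝ᵥ (T *ᵥ x i)‖
      = ‖star (x i) ⬝ᵥ (T *ᵥ y j)‖ := by
    intro i j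
    have h : star (star (y j) ⬝ᵥ (T *ᵥ x i)) = star (x i) ⬝ᵥ (T *ᵥ y j) := by
      rw [NShelper.star_dot, Matrix.star_mulVec, hT.isHermitian.eq,
        ← Matrix.dotProduct_mulVec]
    rw [← h, Complex.star_def, Complex.norm_conj]
  -- decomposition of the overlap
  have habc : ∀ i j, star (x i) ⬝ᵥ y j
      = star (x i) ⬝ᵥ ((1 - T) *ᵥ y j) + star (x i) ⬝ᵥ (T *ᵥ y j) := by
    intro i j
    rw [← dotProduct_add, ← Matrix.add_mulVec, sub_add_cancel, Matrix.one_mulVec]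
  -- reshape sums over the product type
  have hsum1 : ∑ i, lam i * ∑ j, ‖star (x i) ⬝ᵥ ((1 - T) *ᵥ y j)‖ ^ 2
      = ∑ ω : Fin d × Fin d, lam ω.1 * ‖star (x ω.1) ⬝ᵥ ((1 - T) *ᵥ y ω.2)‖ ^ 2 := by
    rw [Fintype.sum_prod_type]
    exact Finset.sum_congr rfl fun i _ => by rw [Finset.mul_sum]
  have hsum2 : ∑ j, gam j * ∑ i, ‖star (y j) ⬝ᵥ (T *ᵥ x i)‖ ^ 2
      = ∑ ω : Fin d × Fin d, gam ω.2 * ‖star (x ω.1) ⬝ᵥ (T *ᵥ y ω.2)‖ ^ 2 := by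
    rw [Fintype.sum_prod_type_right]
    refine Finset.sum_congr rfl fun j _ => ?_
    rw [Finset.mul_sum]
    exact Finset.sum_congr rfl fun i _ => by rw [habsflip i j]
  -- LHS as a sum of mins
  have hLHS : (1 / 2) * ((∑ ω ∈ Finset.univ.filter (fun ω => p ω ≤ δ * q ω), p ω)
        + δ * (∑ ω ∈ Finset.univ.filter (fun ω => δ * q ω < p ω), q ω))
      = ∑ ω : Fin d × Fin d, (1 / 2) * min (p ω) (δ * q ω) := by
    rw [Finset.sum_filter, Finset.sum_filter, Finset.mul_sum, ← Finset.sum_add_distrib,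
      Finset.mul_sum]
    refine Finset.sum_congr rfl fun ω _ => ?_
    by_cases h : p ω ≤ δ * q ω
    · rw [if_pos h, if_neg (not_lt.mpr h), min_eq_left h]; ring
    · rw [if_neg h, if_pos (not_le.mp h), min_eq_right (not_le.mp h).le]; ring
  have hpt : ∀ ω : Fin d × Fin d, (1 / 2) * min (p ω) (δ * q ω)
      ≤ lam ω.1 * ‖star (x ω.1) ⬝ᵥ ((1 - T) *ᵥ y ω.2)‖ ^ 2
        + δ * (gam ω.2 * ‖star (x ω.1) ⬝ᵥ (T *ᵥ y ω.2)‖ ^ 2) := by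
    intro ω
    rw [hp ω, hq ω, habc ω.1 ω.2]
    exact NShelper.pointwise _ _ δ (hlam ω.1) (hgam ω.2) hδ.le _ _
  rw [hLHS]
  calc ∑ ω : Fin d × Fin d, (1 / 2) * min (p ω) (δ * q ω)
      ≤ ∑ ω : Fin d × Fin d,
          (lam ω.1 * ‖star (x ω.1) ⬝ᵥ ((1 - T) *ᵥ y ω.2)‖ ^ 2
            + δ * (gam ω.2 * ‖star (x ω.1) ⬝ᵥ (T *ᵥ y ω.2)‖ ^ 2)) :=
        Finset.sum_le_sum fun ω _ => hpt ω
    _ = (∑ ω : Fin d × Fin d, lam ω.1 * ‖star (x ω.1) ⬝ᵥ ((1 - T) *ᵥ y ω.2)‖ ^ 2)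
        + δ * (∑ ω : Fin d × Fin d, gam ω.2 * ‖star (x ω.1) ⬝ᵥ (T *ᵥ y ω.2)‖ ^ 2) := by
        rw [Finset.sum_add_distrib, Finset.mul_sum]
    _ ≤ ((ρ * (1 - T)).trace).re + δ * ((σ * T).trace).re :=
        add_le_add (hsum1 ▸ hα) (mul_le_mul_of_nonneg_left (hsum2 ▸ hβ) hδ.le)
end
end

section
/- Let ρ and σ be density operators on a finite-dimensional complex Hilbert space with Nussbaum–Szkola distributions p, q. Then for every n ≥ 1, every test 0 ≤ T_n ≤ I on the n-fold tensor power space, and every real b, with α_n[T_n] := Tr[ρ^{⊗n}(I − T_n)] and β_n[T_n] := Tr[σ^{⊗n} T_n], one has α_n[T_n] + e^{−nb}·β_n[T_n] ≥ (1/2)·[ f_n(b) + e^{−nb}·g_n(b) ], where f_n(b) := p^n{ (1/n)·log(q^n/p^n) ≥ b } and g_n(b) := q^n{ (1/n)·log(q^n/p^n) < b } are the probabilities under the n-fold product distributions p^n and q^n of the indicated events. -/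
open scoped Matrix ComplexOrder
open Filter

noncomputable section

namespace NSaux


lemma parseval' {ι m : Type*} [Fintype ι] [Fintype m] [DecidableEq m] (Z : ι → m → ℂ)
    (hc : ∀ v w, (∑ i, (starRingEnd ℂ) (Z i v) * Z i w) = if v = w then 1 else 0)
    (u : m → ℂ) :
    (∑ i, (‖star (Z i) ⬝ᵥ u‖)^2) = (star u ⬝ᵥ u).re := by
  classical
  have key : (∑ i, ((‖star (Z i) ⬝ᵥ u‖ : ℝ) : ℂ)^2) = star u ⬝ᵥ u := by
    have h1 : ∀ i, ((‖star (Z i) ⬝ᵥ u‖ : ℝ) : ℂ)^2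
        = (star (Z i) ⬝ᵥ u) * (starRingEnd ℂ) (star (Z i) ⬝ᵥ u) := by
      intro i
      rw [Complex.mul_conj']
    have expand : ∀ i, (star (Z i) ⬝ᵥ u) * (starRingEnd ℂ) (star (Z i) ⬝ᵥ u)
        = ∑ v, ∑ w, ((starRingEnd ℂ) (Z i v) * Z i w) * (u v * (starRingEnd ℂ) (u w)) := by
      intro i
      simp only [dotProduct, Pi.star_apply, RCLike.star_def, map_sum, map_mul,
        Complex.conj_conj]
      rw [Finset.sum_mul_sum]
      exact Finset.sum_congr rfl fun v _ => Finset.sum_congr rfl fun w _ => by ring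
    simp_rw [h1, expand]
    rw [Finset.sum_comm]
    have swap2 : ∀ v, (∑ i : ι, ∑ w,
        ((starRingEnd ℂ) (Z i v) * Z i w) * (u v * (starRingEnd ℂ) (u w)))
        = ∑ w, (∑ i : ι, (starRingEnd ℂ) (Z i v) * Z i w)
            * (u v * (starRingEnd ℂ) (u w)) := by
      intro v
      rw [Finset.sum_comm]
      exact Finset.sum_congr rfl fun w _ => (Finset.sum_mul _ _ _).symm
    simp_rw [swap2, hc]
    simp [dotProduct, mul_comm]
  have := congrArg Complex.re key
  rw [← this]
  simp [← Complex.ofReal_pow]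

variable {m : Type*} [Fintype m] [DecidableEq m]

lemma sub_sq_posSemidef {T : Matrix m m ℂ} (hT : T.PosSemidef) (hT' : (1 - T).PosSemidef) :
    (T - T * T).PosSemidef := by
  have hherm : (1 - T)ᴴ = 1 - T := hT'.isHermitian.eq
  have hThe : Tᴴ = T := hT.isHermitian.eq
  have key : (1 - T) * T * (1 - T)ᴴ + T * (1 - T) * Tᴴ = T - T * T := by
    rw [hherm, hThe]; noncomm_ring
  rw [← key]
  exact (hT.mul_mul_conjTranspose_same (1 - T)).add (hT'.mul_mul_conjTranspose_same T)

lemma quad_sq_le {T : Matrix m m ℂ} (hT : T.PosSemidef) (hT' : (1 - T).PosSemidef)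
    (u : m → ℂ) :
    (star u ⬝ᵥ ((T * T) *ᵥ u)).re ≤ (star u ⬝ᵥ (T *ᵥ u)).re := by
  have h := (sub_sq_posSemidef hT hT').re_dotProduct_nonneg u
  rw [Matrix.sub_mulVec, dotProduct_sub] at h
  simp only [RCLike.re_to_complex, Complex.sub_re] at h
  linarith

lemma conj_dot (A : Matrix m m ℂ) (a b : m → ℂ) :
    (starRingEnd ℂ) (star a ⬝ᵥ (A *ᵥ b)) = star b ⬝ᵥ (Aᴴ *ᵥ a) := by
  classical
  simp only [dotProduct, Matrix.mulVec, dotProduct, Pi.star_apply,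
    RCLike.star_def, map_sum, map_mul, Complex.conj_conj, Matrix.conjTranspose_apply]
  simp_rw [Finset.mul_sum]
  rw [Finset.sum_comm]
  exact Finset.sum_congr rfl fun v _ => Finset.sum_congr rfl fun w _ => by ring

lemma min_split {a b K K1 K2 : ℝ} (ha : 0 ≤ a) (hb : 0 ≤ b) (hK1 : 0 ≤ K1) (hK2 : 0 ≤ K2)
    (hK : K ≤ 2 * K1 + 2 * K2) :
    min (a * K) (b * K) ≤ 2 * a * K1 + 2 * b * K2 := by
  rcases le_total a b with h | h
  · calc min (a * K) (b * K) ≤ a * K := min_le_left _ _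
      _ ≤ a * (2 * K1 + 2 * K2) := by nlinarith
      _ ≤ 2 * a * K1 + 2 * b * K2 := by nlinarith
  · calc min (a * K) (b * K) ≤ b * K := min_le_right _ _
      _ ≤ b * (2 * K1 + 2 * K2) := by nlinarith
      _ ≤ 2 * a * K1 + 2 * b * K2 := by nlinarith

/-- Abstract core inequality. -/
lemma core {ι : Type*} [Fintype ι] (X Y : ι → m → ℂ)
    (hXc : ∀ v w, (∑ i, (starRingEnd ℂ) (X i v) * X i w) = if v = w then 1 else 0)
    (hYc : ∀ v w, (∑ i, (starRingEnd ℂ) (Y i v) * Y i w) = if v = w then 1 else 0)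
    (Λ Γ : ι → ℝ) (hΛ : ∀ i, 0 ≤ Λ i) (hΓ : ∀ j, 0 ≤ Γ j)
    (c : ℝ) (hc : 0 ≤ c)
    (T : Matrix m m ℂ) (hT : T.PosSemidef) (hT' : (1 - T).PosSemidef) :
    (∑ i, ∑ j, min (Λ i * (‖star (X i) ⬝ᵥ Y j‖)^2)
        (c * (Γ j * (‖star (X i) ⬝ᵥ Y j‖)^2)))
      ≤ 2 * ((∑ i, Λ i * (star (X i) ⬝ᵥ ((1 - T) *ᵥ X i)).re)
          + c * (∑ j, Γ j * (star (Y j) ⬝ᵥ (T *ᵥ Y j)).re)) := by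
  classical
  have hT1 : (1 - (1 - T)).PosSemidef := by simpa using hT
  have key : ∀ i j, min (Λ i * (‖star (X i) ⬝ᵥ Y j‖)^2)
        (c * (Γ j * (‖star (X i) ⬝ᵥ Y j‖)^2))
      ≤ 2 * Λ i * (‖star (X i) ⬝ᵥ ((1 - T) *ᵥ Y j)‖)^2
        + 2 * (c * Γ j) * (‖star (X i) ⬝ᵥ (T *ᵥ Y j)‖)^2 := by
    intro i j
    have hdec : (star (X i) ⬝ᵥ Y j)
        = star (X i) ⬝ᵥ ((1 - T) *ᵥ Y j) + star (X i) ⬝ᵥ (T *ᵥ Y j) := by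
      rw [← dotProduct_add, ← Matrix.add_mulVec, sub_add_cancel, Matrix.one_mulVec]
    have habs : ‖star (X i) ⬝ᵥ Y j‖
        ≤ ‖star (X i) ⬝ᵥ ((1 - T) *ᵥ Y j)‖
          + ‖star (X i) ⬝ᵥ (T *ᵥ Y j)‖ := by
      rw [hdec]; exact norm_add_le _ _
    have hKb : (‖star (X i) ⬝ᵥ Y j‖)^2
        ≤ 2 * (‖star (X i) ⬝ᵥ ((1 - T) *ᵥ Y j)‖)^2
          + 2 * (‖star (X i) ⬝ᵥ (T *ᵥ Y j)‖)^2 := by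
      nlinarith [habs, norm_nonneg (star (X i) ⬝ᵥ Y j),
        norm_nonneg (star (X i) ⬝ᵥ ((1 - T) *ᵥ Y j)),
        norm_nonneg (star (X i) ⬝ᵥ (T *ᵥ Y j)),
        sq_nonneg (‖star (X i) ⬝ᵥ ((1 - T) *ᵥ Y j)‖
          - ‖star (X i) ⬝ᵥ (T *ᵥ Y j)‖)]
    have h := min_split (hΛ i) (mul_nonneg hc (hΓ j)) (sq_nonneg _) (sq_nonneg _) hKb
    calc min (Λ i * (‖star (X i) ⬝ᵥ Y j‖)^2)
          (c * (Γ j * (‖star (X i) ⬝ᵥ Y j‖)^2))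
        = min (Λ i * (‖star (X i) ⬝ᵥ Y j‖)^2)
          ((c * Γ j) * (‖star (X i) ⬝ᵥ Y j‖)^2) := by rw [mul_assoc]
      _ ≤ _ := h
  have hsum1 : ∀ i, (∑ j, (‖star (X i) ⬝ᵥ ((1 - T) *ᵥ Y j)‖)^2)
      ≤ (star (X i) ⬝ᵥ ((1 - T) *ᵥ X i)).re := by
    intro i
    have heq : ∀ j, (‖star (X i) ⬝ᵥ ((1 - T) *ᵥ Y j)‖)^2
        = (‖star (Y j) ⬝ᵥ ((1 - T) *ᵥ X i)‖)^2 := by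
      intro j
      conv_lhs => rw [← Complex.norm_conj, conj_dot, hT'.isHermitian.eq]
    simp_rw [heq]
    rw [parseval' Y hYc ((1 - T) *ᵥ X i)]
    have hrw : star ((1 - T) *ᵥ X i) ⬝ᵥ ((1 - T) *ᵥ X i)
        = star (X i) ⬝ᵥ (((1 - T) * (1 - T)) *ᵥ X i) := by
      rw [Matrix.star_mulVec, hT'.isHermitian.eq, ← Matrix.mulVec_mulVec,
        Matrix.dotProduct_mulVec, ← Matrix.dotProduct_mulVec, ← Matrix.dotProduct_mulVec]
    rw [hrw]
    exact quad_sq_le hT' hT1 (X i)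
  have hsum2 : ∀ j, (∑ i, (‖star (X i) ⬝ᵥ (T *ᵥ Y j)‖)^2)
      ≤ (star (Y j) ⬝ᵥ (T *ᵥ Y j)).re := by
    intro j
    rw [parseval' X hXc (T *ᵥ Y j)]
    have hrw : star (T *ᵥ Y j) ⬝ᵥ (T *ᵥ Y j)
        = star (Y j) ⬝ᵥ ((T * T) *ᵥ Y j) := by
      rw [Matrix.star_mulVec, hT.isHermitian.eq, ← Matrix.mulVec_mulVec,
        Matrix.dotProduct_mulVec, ← Matrix.dotProduct_mulVec, ← Matrix.dotProduct_mulVec]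
    rw [hrw]
    exact quad_sq_le hT hT' (Y j)
  calc (∑ i, ∑ j, min (Λ i * (‖star (X i) ⬝ᵥ Y j‖)^2)
        (c * (Γ j * (‖star (X i) ⬝ᵥ Y j‖)^2)))
      ≤ ∑ i, ∑ j, (2 * Λ i * (‖star (X i) ⬝ᵥ ((1 - T) *ᵥ Y j)‖)^2
          + 2 * (c * Γ j) * (‖star (X i) ⬝ᵥ (T *ᵥ Y j)‖)^2) :=
        Finset.sum_le_sum fun i _ => Finset.sum_le_sum fun j _ => key i j
    _ = (∑ i, 2 * Λ i * ∑ j, (‖star (X i) ⬝ᵥ ((1 - T) *ᵥ Y j)‖)^2)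
        + ∑ j, 2 * (c * Γ j) * ∑ i, (‖star (X i) ⬝ᵥ (T *ᵥ Y j)‖)^2 := by
        simp_rw [Finset.sum_add_distrib]
        congr 1
        · exact Finset.sum_congr rfl fun i _ => (Finset.mul_sum _ _ _).symm
        · rw [Finset.sum_comm]
          exact Finset.sum_congr rfl fun j _ => (Finset.mul_sum _ _ _).symm
    _ ≤ (∑ i, 2 * Λ i * (star (X i) ⬝ᵥ ((1 - T) *ᵥ X i)).re)
        + ∑ j, 2 * (c * Γ j) * (star (Y j) ⬝ᵥ (T *ᵥ Y j)).re := by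
        refine add_le_add (Finset.sum_le_sum fun i _ => ?_)
          (Finset.sum_le_sum fun j _ => ?_)
        · exact mul_le_mul_of_nonneg_left (hsum1 i)
            (mul_nonneg (by norm_num) (hΛ i))
        · exact mul_le_mul_of_nonneg_left (hsum2 j)
            (mul_nonneg (by norm_num) (mul_nonneg hc (hΓ j)))
    _ = 2 * ((∑ i, Λ i * (star (X i) ⬝ᵥ ((1 - T) *ᵥ X i)).re)
          + c * (∑ j, Γ j * (star (Y j) ⬝ᵥ (T *ᵥ Y j)).re)) := by
        rw [mul_add, Finset.mul_sum, Finset.mul_sum, Finset.mul_sum]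
        congr 1
        · exact Finset.sum_congr rfl fun i _ => by ring
        · exact Finset.sum_congr rfl fun j _ => by ring


lemma tensorPow_entry {d n : ℕ} (lam : Fin d → ℝ) (x : Fin d → Fin d → ℂ)
    (ρ : Matrix (Fin d) (Fin d) ℂ)
    (hρ : ∀ a b, ρ a b = ∑ i, (lam i : ℂ) * (x i a * (starRingEnd ℂ) (x i b)))
    (v w : Fin n → Fin d) :
    tensorPow ρ n v w = ∑ μ : Fin n → Fin d,
      ((∏ t, lam (μ t) : ℝ) : ℂ) *
        ((∏ t, x (μ t) (v t)) * (starRingEnd ℂ) (∏ t, x (μ t) (w t))) := by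
  classical
  show (∏ t, ρ (v t) (w t)) = _
  simp_rw [hρ]
  rw [Finset.prod_univ_sum, ← Fintype.piFinset_univ]
  refine Finset.sum_congr rfl fun μ _ => ?_
  rw [Finset.prod_mul_distrib, Finset.prod_mul_distrib, map_prod]
  push_cast
  ring

lemma trace_decomp {d n : ℕ} (lam : Fin d → ℝ) (x : Fin d → Fin d → ℂ)
    (ρ : Matrix (Fin d) (Fin d) ℂ)
    (hρ : ∀ a b, ρ a b = ∑ i, (lam i : ℂ) * (x i a * (starRingEnd ℂ) (x i b)))
    (S : Matrix (Fin n → Fin d) (Fin n → Fin d) ℂ) :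
    (tensorPow ρ n * S).trace = ∑ μ : Fin n → Fin d,
      ((∏ t, lam (μ t) : ℝ) : ℂ) *
        (star (fun v => ∏ t, x (μ t) (v t)) ⬝ᵥ (S *ᵥ (fun v => ∏ t, x (μ t) (v t)))) := by
  classical
  rw [Matrix.trace]
  simp_rw [Matrix.diag_apply, Matrix.mul_apply, tensorPow_entry lam x ρ hρ, Finset.sum_mul]
  calc (∑ v, ∑ w, ∑ μ : Fin n → Fin d, ((∏ t, lam (μ t) : ℝ) : ℂ) *
          ((∏ t, x (μ t) (v t)) * (starRingEnd ℂ) (∏ t, x (μ t) (w t))) * S w v)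
      = ∑ v, ∑ μ : Fin n → Fin d, ∑ w, ((∏ t, lam (μ t) : ℝ) : ℂ) *
          ((∏ t, x (μ t) (v t)) * (starRingEnd ℂ) (∏ t, x (μ t) (w t))) * S w v :=
        Finset.sum_congr rfl fun v _ => Finset.sum_comm
    _ = ∑ μ : Fin n → Fin d, ∑ v, ∑ w, ((∏ t, lam (μ t) : ℝ) : ℂ) *
          ((∏ t, x (μ t) (v t)) * (starRingEnd ℂ) (∏ t, x (μ t) (w t))) * S w v :=
        Finset.sum_comm
    _ = ∑ μ : Fin n → Fin d, ∑ w, ∑ v, ((∏ t, lam (μ t) : ℝ) : ℂ) *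
          ((∏ t, x (μ t) (v t)) * (starRingEnd ℂ) (∏ t, x (μ t) (w t))) * S w v :=
        Finset.sum_congr rfl fun μ _ => Finset.sum_comm
    _ = _ := by
        refine Finset.sum_congr rfl fun μ _ => ?_
        simp_rw [dotProduct, Matrix.mulVec, dotProduct, Pi.star_apply,
          RCLike.star_def, Finset.mul_sum]
        exact Finset.sum_congr rfl fun w _ => Finset.sum_congr rfl fun v _ => by ring

lemma complete_of_orthonormal {d : ℕ} (x : Fin d → Fin d → ℂ)
    (hx : ∀ i j, star (x i) ⬝ᵥ x j = if i = j then 1 else 0) (v w : Fin d) :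
    (∑ i, (starRingEnd ℂ) (x i v) * x i w) = if v = w then 1 else 0 := by
  classical
  set M : Matrix (Fin d) (Fin d) ℂ := Matrix.of (fun i j => x i j) with hM
  have h1 : M * Mᴴ = 1 := by
    ext i j
    have h := hx j i
    simp only [dotProduct, Pi.star_apply, RCLike.star_def] at h
    have : (M * Mᴴ) i j = ∑ k, (starRingEnd ℂ) (x j k) * x i k := by
      simp [Matrix.mul_apply, Matrix.conjTranspose_apply, hM, mul_comm]
    rw [this, h, Matrix.one_apply]
    by_cases hij : i = j <;> simp [hij, eq_comm]
  have h2 : Mᴴ * M = 1 := mul_eq_one_comm.mp h1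
  have h3 := congrFun (congrFun h2 v) w
  simpa [Matrix.mul_apply, Matrix.conjTranspose_apply, hM, Matrix.one_apply] using h3

lemma tensor_complete {d n : ℕ} (y : Fin d → Fin d → ℂ)
    (hc : ∀ v w, (∑ i, (starRingEnd ℂ) (y i v) * y i w) = if v = w then 1 else 0)
    (v w : Fin n → Fin d) :
    (∑ ν : Fin n → Fin d, (starRingEnd ℂ) (∏ t, y (ν t) (v t)) * ∏ t, y (ν t) (w t))
      = if v = w then 1 else 0 := by
  classical
  have key : ∀ ν : Fin n → Fin d,
      (starRingEnd ℂ) (∏ t, y (ν t) (v t)) * ∏ t, y (ν t) (w t)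
        = ∏ t, ((starRingEnd ℂ) (y (ν t) (v t)) * y (ν t) (w t)) := by
    intro ν
    rw [map_prod, ← Finset.prod_mul_distrib]
  simp_rw [key]
  rw [← Fintype.piFinset_univ, ← Finset.prod_univ_sum (fun _ => (Finset.univ : Finset (Fin d)))
      (fun t j => (starRingEnd ℂ) (y j (v t)) * y j (w t))]
  simp_rw [hc]
  by_cases hvw : v = w
  · simp [hvw]
  · obtain ⟨t, ht⟩ := Function.ne_iff.mp hvw
    rw [if_neg hvw]
    exact Finset.prod_eq_zero (Finset.mem_univ t) (by simp [ht])

lemma eigenvalue_eq {d : ℕ} (lam : Fin d → ℝ) (x : Fin d → Fin d → ℂ)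
    (hx : ∀ i j, star (x i) ⬝ᵥ x j = if i = j then 1 else 0)
    (ρ : Matrix (Fin d) (Fin d) ℂ)
    (hρe : ∀ a b, ρ a b = ∑ i, (lam i : ℂ) * (x i a * (starRingEnd ℂ) (x i b)))
    (i : Fin d) :
    star (x i) ⬝ᵥ (ρ *ᵥ x i) = (lam i : ℂ) := by
  classical
  have hx' : ∀ j k, (∑ a, (starRingEnd ℂ) (x j a) * x k a) = if j = k then 1 else 0 := by
    intro j k
    have := hx j k
    simpa [dotProduct, Pi.star_apply, RCLike.star_def] using this
  simp only [dotProduct, Matrix.mulVec, dotProduct, Pi.star_apply,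
    RCLike.star_def]
  simp_rw [hρe, Finset.sum_mul, Finset.mul_sum]
  calc (∑ a, ∑ b, ∑ j, (starRingEnd ℂ) (x i a) *
          (((lam j : ℂ) * (x j a * (starRingEnd ℂ) (x j b))) * x i b))
      = ∑ a, ∑ j, ∑ b, (starRingEnd ℂ) (x i a) *
          (((lam j : ℂ) * (x j a * (starRingEnd ℂ) (x j b))) * x i b) :=
        Finset.sum_congr rfl fun a _ => Finset.sum_comm
    _ = ∑ j, ∑ a, ∑ b, (starRingEnd ℂ) (x i a) *
          (((lam j : ℂ) * (x j a * (starRingEnd ℂ) (x j b))) * x i b) :=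
        Finset.sum_comm
    _ = ∑ j, (lam j : ℂ) * ((∑ a, (starRingEnd ℂ) (x i a) * x j a)
          * (∑ b, (starRingEnd ℂ) (x j b) * x i b)) := by
        refine Finset.sum_congr rfl fun j _ => ?_
        simp_rw [Finset.sum_mul_sum, Finset.mul_sum]
        exact Finset.sum_congr rfl fun a _ => Finset.sum_congr rfl fun b _ => by ring
    _ = (lam i : ℂ) := by
        simp_rw [hx']
        rw [Finset.sum_eq_single i]
        · simp
        · intro j _ hj
          simp [hj, Ne.symm hj]
        · simp

lemma dot_tensor {d n : ℕ} (x y : Fin d → Fin d → ℂ) (μ ν : Fin n → Fin d) :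
    star (fun v : Fin n → Fin d => ∏ t, x (μ t) (v t)) ⬝ᵥ (fun v => ∏ t, y (ν t) (v t))
      = ∏ t, (star (x (μ t)) ⬝ᵥ y (ν t)) := by
  classical
  simp only [dotProduct, Pi.star_apply, RCLike.star_def, map_prod]
  rw [Finset.prod_univ_sum, ← Fintype.piFinset_univ]
  exact Finset.sum_congr rfl fun v _ => (Finset.prod_mul_distrib).symm

end NSaux

/-- The i.i.d. version of the Lemma: for every `n ≥ 1`, every test `0 ≤ Tₙ ≤ I` on the
`n`-fold tensor power space and every real `b`,
`αₙ[Tₙ] + e^{−nb}·βₙ[Tₙ] ≥ (1/2)·[fₙ(b) + e^{−nb}·gₙ(b)]`, where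
`fₙ(b) = pⁿ{pⁿ ≤ e^{−nb} qⁿ}` and `gₙ(b) = qⁿ{pⁿ > e^{−nb} qⁿ}`. -/
theorem lemma_main_ineq_iid {d : ℕ} (ρ σ : Matrix (Fin d) (Fin d) ℂ)
    (hρ : ρ.PosSemidef) (hρ1 : ρ.trace = 1)
    (hσ : σ.PosSemidef) (hσ1 : σ.trace = 1)
    (lam gam : Fin d → ℝ) (x y : Fin d → Fin d → ℂ)
    (hx : ∀ i j, star (x i) ⬝ᵥ x j = if i = j then 1 else 0)
    (hy : ∀ i j, star (y i) ⬝ᵥ y j = if i = j then 1 else 0)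
    (hρdec : ρ = ∑ i, (lam i : ℂ) • Matrix.vecMulVec (x i) (star (x i)))
    (hσdec : σ = ∑ j, (gam j : ℂ) • Matrix.vecMulVec (y j) (star (y j)))
    (p q : Fin d × Fin d → ℝ)
    (hp : ∀ ω, p ω = lam ω.1 * ‖star (x ω.1) ⬝ᵥ y ω.2‖ ^ 2)
    (hq : ∀ ω, q ω = gam ω.2 * ‖star (x ω.1) ⬝ᵥ y ω.2‖ ^ 2)
    (n : ℕ) (hn : 1 ≤ n)
    (T : Matrix (Fin n → Fin d) (Fin n → Fin d) ℂ)
    (hT : T.PosSemidef) (hT' : (1 - T).PosSemidef)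
    (b : ℝ) :
    (1 / 2) * ((∑ ω ∈ Finset.univ.filter
          (fun ω : Fin n → Fin d × Fin d =>
            (∏ t, p (ω t)) ≤ Real.exp (-(n : ℝ) * b) * ∏ t, q (ω t)), ∏ t, p (ω t))
        + Real.exp (-(n : ℝ) * b) * (∑ ω ∈ Finset.univ.filter
          (fun ω : Fin n → Fin d × Fin d =>
            Real.exp (-(n : ℝ) * b) * (∏ t, q (ω t)) < ∏ t, p (ω t)), ∏ t, q (ω t)))
      ≤ ((tensorPow ρ n * (1 - T)).trace).re
        + Real.exp (-(n : ℝ) * b) * ((tensorPow σ n * T).trace).re := by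
  
  classical
  set c := Real.exp (-(n : ℝ) * b) with hcdef
  have hc : 0 < c := Real.exp_pos _
  -- entrywise spectral decompositions
  have hρe : ∀ a b, ρ a b = ∑ i, (lam i : ℂ) * (x i a * (starRingEnd ℂ) (x i b)) := by
    intro a b
    rw [hρdec]
    simp [Matrix.sum_apply, Matrix.vecMulVec_apply, Pi.star_apply, RCLike.star_def,
      mul_assoc]
  have hσe : ∀ a b, σ a b = ∑ j, (gam j : ℂ) * (y j a * (starRingEnd ℂ) (y j b)) := by
    intro a b
    rw [hσdec]
    simp [Matrix.sum_apply, Matrix.vecMulVec_apply, Pi.star_apply, RCLike.star_def,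
      mul_assoc]
  -- nonnegativity of the eigenvalues
  have hlam : ∀ i, 0 ≤ lam i := by
    intro i
    have h0 := hρ.dotProduct_mulVec_nonneg (x i)
    rw [NSaux.eigenvalue_eq lam x hx ρ hρe i] at h0
    exact Complex.zero_le_real.mp h0
  have hgam : ∀ j, 0 ≤ gam j := by
    intro j
    have h0 := hσ.dotProduct_mulVec_nonneg (y j)
    rw [NSaux.eigenvalue_eq gam y hy σ hσe j] at h0
    exact Complex.zero_le_real.mp h0
  have hΛ : ∀ μ : Fin n → Fin d, 0 ≤ ∏ t, lam (μ t) :=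
    fun μ => Finset.prod_nonneg fun t _ => hlam _
  have hΓ : ∀ ν : Fin n → Fin d, 0 ≤ ∏ t, gam (ν t) :=
    fun ν => Finset.prod_nonneg fun t _ => hgam _
  -- completeness of the tensor families
  have hXc := NSaux.tensor_complete (n := n) x (NSaux.complete_of_orthonormal x hx)
  have hYc := NSaux.tensor_complete (n := n) y (NSaux.complete_of_orthonormal y hy)
  -- trace identities
  have htr1 : ((tensorPow ρ n * (1 - T)).trace).re = ∑ μ : Fin n → Fin d,
      (∏ t, lam (μ t)) *
        (star (fun v : Fin n → Fin d => ∏ t, x (μ t) (v t)) ⬝ᵥ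
          ((1 - T) *ᵥ (fun v => ∏ t, x (μ t) (v t)))).re := by
    rw [NSaux.trace_decomp lam x ρ hρe (1 - T), Complex.re_sum]
    exact Finset.sum_congr rfl fun μ _ => Complex.re_ofReal_mul _ _
  have htr2 : ((tensorPow σ n * T).trace).re = ∑ ν : Fin n → Fin d,
      (∏ t, gam (ν t)) *
        (star (fun v : Fin n → Fin d => ∏ t, y (ν t) (v t)) ⬝ᵥ
          (T *ᵥ (fun v => ∏ t, y (ν t) (v t)))).re := by
    rw [NSaux.trace_decomp gam y σ hσe T, Complex.re_sum]
    exact Finset.sum_congr rfl fun ν _ => Complex.re_ofReal_mul _ _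
  -- product formulas for p and q
  have hPfact : ∀ μ ν : Fin n → Fin d, (∏ t, p (μ t, ν t)) = (∏ t, lam (μ t)) *
      (‖star (fun v : Fin n → Fin d => ∏ t, x (μ t) (v t)) ⬝ᵥ
        (fun v => ∏ t, y (ν t) (v t))‖)^2 := by
    intro μ ν
    rw [NSaux.dot_tensor, norm_prod, ← Finset.prod_pow, ← Finset.prod_mul_distrib]
    exact Finset.prod_congr rfl fun t _ => hp (μ t, ν t)
  have hQfact : ∀ μ ν : Fin n → Fin d, (∏ t, q (μ t, ν t)) = (∏ t, gam (ν t)) *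
      (‖star (fun v : Fin n → Fin d => ∏ t, x (μ t) (v t)) ⬝ᵥ
        (fun v => ∏ t, y (ν t) (v t))‖)^2 := by
    intro μ ν
    rw [NSaux.dot_tensor, norm_prod, ← Finset.prod_pow, ← Finset.prod_mul_distrib]
    exact Finset.prod_congr rfl fun t _ => hq (μ t, ν t)
  -- the filtered sums combine into a sum of minima
  have hsplit : (∑ ω ∈ Finset.univ.filter
        (fun ω : Fin n → Fin d × Fin d => (∏ t, p (ω t)) ≤ c * ∏ t, q (ω t)), ∏ t, p (ω t))
      + c * (∑ ω ∈ Finset.univ.filter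
        (fun ω : Fin n → Fin d × Fin d => c * (∏ t, q (ω t)) < ∏ t, p (ω t)), ∏ t, q (ω t))
      = ∑ ω : Fin n → Fin d × Fin d, min (∏ t, p (ω t)) (c * ∏ t, q (ω t)) := by
    rw [Finset.mul_sum]
    rw [← Finset.sum_filter_add_sum_filter_not Finset.univ
        (fun ω : Fin n → Fin d × Fin d => (∏ t, p (ω t)) ≤ c * ∏ t, q (ω t))
        (fun ω => min (∏ t, p (ω t)) (c * ∏ t, q (ω t)))]
    congr 1
    · exact Finset.sum_congr rfl fun ω hω => (min_eq_left (Finset.mem_filter.mp hω).2).symm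
    · have hfil : (Finset.univ.filter
          (fun ω : Fin n → Fin d × Fin d => c * (∏ t, q (ω t)) < ∏ t, p (ω t)))
          = Finset.univ.filter
            (fun ω : Fin n → Fin d × Fin d => ¬((∏ t, p (ω t)) ≤ c * ∏ t, q (ω t))) := by
        apply Finset.filter_congr
        intro ω _
        exact lt_iff_not_ge
      rw [hfil]
      refine Finset.sum_congr rfl fun ω hω => ?_
      have h := (Finset.mem_filter.mp hω).2
      exact (min_eq_right (le_of_lt (not_le.mp h))).symm
  -- reindex the sum of minima as a double sum
  have hreindex : (∑ ω : Fin n → Fin d × Fin d, min (∏ t, p (ω t)) (c * ∏ t, q (ω t)))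
      = ∑ μ : Fin n → Fin d, ∑ ν : Fin n → Fin d,
        min ((∏ t, lam (μ t)) *
            (‖star (fun v : Fin n → Fin d => ∏ t, x (μ t) (v t)) ⬝ᵥ
              (fun v => ∏ t, y (ν t) (v t))‖)^2)
          (c * ((∏ t, gam (ν t)) *
            (‖star (fun v : Fin n → Fin d => ∏ t, x (μ t) (v t)) ⬝ᵥ
              (fun v => ∏ t, y (ν t) (v t))‖)^2)) := by
    refine Eq.trans (Fintype.sum_equiv (Equiv.arrowProdEquivProdArrow (Fin n) (fun _ => Fin d) (fun _ => Fin d))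
        _ (fun z => min ((∏ t, lam (z.1 t)) *
            (‖star (fun v : Fin n → Fin d => ∏ t, x (z.1 t) (v t)) ⬝ᵥ
              (fun v => ∏ t, y (z.2 t) (v t))‖)^2)
          (c * ((∏ t, gam (z.2 t)) *
            (‖star (fun v : Fin n → Fin d => ∏ t, x (z.1 t) (v t)) ⬝ᵥ
              (fun v => ∏ t, y (z.2 t) (v t))‖)^2))) ?_) ?_
    swap
    · rw [Fintype.sum_prod_type]
    intro ω
    have h1 : (∏ t, p (ω t)) = (∏ t, lam ((ω t).1)) *
        (‖star (fun v : Fin n → Fin d => ∏ t, x ((ω t).1) (v t)) ⬝ᵥ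
          (fun v => ∏ t, y ((ω t).2) (v t))‖)^2 :=
      hPfact (fun t => (ω t).1) (fun t => (ω t).2)
    have h2 : (∏ t, q (ω t)) = (∏ t, gam ((ω t).2)) *
        (‖star (fun v : Fin n → Fin d => ∏ t, x ((ω t).1) (v t)) ⬝ᵥ
          (fun v => ∏ t, y ((ω t).2) (v t))‖)^2 :=
      hQfact (fun t => (ω t).1) (fun t => (ω t).2)
    rw [h1, h2]
    rfl
  -- introduce opaque names for the tensor families to keep unification cheap
  obtain ⟨X, hX'⟩ : ∃ X : (Fin n → Fin d) → (Fin n → Fin d) → ℂ,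
      X = (fun μ v => ∏ t, x (μ t) (v t)) := ⟨_, rfl⟩
  obtain ⟨Y, hY'⟩ : ∃ Y : (Fin n → Fin d) → (Fin n → Fin d) → ℂ,
      Y = (fun ν v => ∏ t, y (ν t) (v t)) := ⟨_, rfl⟩
  obtain ⟨Lam, hL'⟩ : ∃ L : (Fin n → Fin d) → ℝ,
      L = (fun μ => ∏ t, lam (μ t)) := ⟨_, rfl⟩
  obtain ⟨Gam, hG'⟩ : ∃ G : (Fin n → Fin d) → ℝ,
      G = (fun ν => ∏ t, gam (ν t)) := ⟨_, rfl⟩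
  have hXc2 : ∀ v w, (∑ μ : Fin n → Fin d, (starRingEnd ℂ) (X μ v) * X μ w)
      = if v = w then 1 else 0 := by
    simp only [hX']; exact hXc
  have hYc2 : ∀ v w, (∑ ν : Fin n → Fin d, (starRingEnd ℂ) (Y ν v) * Y ν w)
      = if v = w then 1 else 0 := by
    simp only [hY']; exact hYc
  have hΛ2 : ∀ μ, 0 ≤ Lam μ := by simp only [hL']; exact hΛ
  have hΓ2 : ∀ ν, 0 ≤ Gam ν := by simp only [hG']; exact hΓ
  have htr1b : ((tensorPow ρ n * (1 - T)).trace).re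
      = ∑ μ : Fin n → Fin d, Lam μ * (star (X μ) ⬝ᵥ ((1 - T) *ᵥ X μ)).re := by
    simp only [hX', hL']; exact htr1
  have htr2b : ((tensorPow σ n * T).trace).re
      = ∑ ν : Fin n → Fin d, Gam ν * (star (Y ν) ⬝ᵥ (T *ᵥ Y ν)).re := by
    simp only [hY', hG']; exact htr2
  have hreindexb : (∑ ω : Fin n → Fin d × Fin d, min (∏ t, p (ω t)) (c * ∏ t, q (ω t)))
      = ∑ μ : Fin n → Fin d, ∑ ν : Fin n → Fin d,
        min (Lam μ * (‖star (X μ) ⬝ᵥ Y ν‖)^2)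
          (c * (Gam ν * (‖star (X μ) ⬝ᵥ Y ν‖)^2)) := by
    simp only [hX', hY', hL', hG']; exact hreindex
  have hcore := NSaux.core X Y hXc2 hYc2 Lam Gam hΛ2 hΓ2 c hc.le T hT hT'
  rw [htr1b, htr2b]
  calc (1 / 2 : ℝ) * ((∑ ω ∈ Finset.univ.filter
        (fun ω : Fin n → Fin d × Fin d => (∏ t, p (ω t)) ≤ c * ∏ t, q (ω t)), ∏ t, p (ω t))
      + c * (∑ ω ∈ Finset.univ.filter
        (fun ω : Fin n → Fin d × Fin d => c * (∏ t, q (ω t)) < ∏ t, p (ω t)), ∏ t, q (ω t)))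
      = (1 / 2 : ℝ) * ∑ μ : Fin n → Fin d, ∑ ν : Fin n → Fin d,
        min (Lam μ * (‖star (X μ) ⬝ᵥ Y ν‖)^2)
          (c * (Gam ν * (‖star (X μ) ⬝ᵥ Y ν‖)^2)) := by
        rw [hsplit, hreindexb]
    _ ≤ (1 / 2 : ℝ) * (2 * ((∑ μ : Fin n → Fin d, Lam μ *
            (star (X μ) ⬝ᵥ ((1 - T) *ᵥ X μ)).re)
          + c * (∑ ν : Fin n → Fin d, Gam ν * (star (Y ν) ⬝ᵥ (T *ᵥ Y ν)).re))) :=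
        mul_le_mul_of_nonneg_left hcore (by norm_num)
    _ = _ := by ring
end
end

section
/- Let ρ and σ be density operators on a finite-dimensional complex Hilbert space. The function Φ(a) := max_{s ∈ [0,1]} (a·s − φ(s)), where φ(s) := log Tr[ρ^{1−s}σ^{s}], is continuous and monotonically increasing on the interval [−D(ρ‖σ), D(σ‖ρ)], and satisfies Φ(−D(ρ‖σ)) = 0 and Φ(D(σ‖ρ)) = D(σ‖ρ). -/
open scoped Matrix ComplexOrder
open Filter

noncomputable section

open Matrix

lemma trace_conj_pair {n : Type*} [Fintype n] [DecidableEq n]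
    (U V : Matrix n n ℂ) (f g : n → ℝ) :
    ((U * Matrix.diagonal (fun i => (f i : ℂ)) * star U) *
     (V * Matrix.diagonal (fun j => (g j : ℂ)) * star V)).trace
    = ∑ i, ∑ j, ((f i * g j * Complex.normSq ((star U * V) i j) : ℝ) : ℂ) := by
  set D := Matrix.diagonal (fun i => (f i : ℂ))
  set D' := Matrix.diagonal (fun j => (g j : ℂ))
  have h1 : (U * D * star U) * (V * D' * star V) = U * (D * star U * (V * D' * star V)) := by
    simp only [mul_assoc]
  rw [h1, Matrix.trace_mul_comm]
  have h2 : (D * star U * (V * D' * star V)) * U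
      = D * (star U * V) * D' * star (star U * V) := by
    simp only [Matrix.star_eq_conjTranspose, Matrix.conjTranspose_mul,
      Matrix.conjTranspose_conjTranspose, mul_assoc]
  rw [h2]
  set W := star U * V with hW
  simp only [Matrix.trace, Matrix.diag_apply, Matrix.mul_apply, D, D', Matrix.diagonal_apply,
    Matrix.star_eq_conjTranspose, Matrix.conjTranspose_apply, ite_mul, zero_mul,
    Finset.sum_ite_eq, Finset.mem_univ, if_true]
  refine Finset.sum_congr rfl fun i _ => ?_
  refine Finset.sum_congr rfl fun j _ => ?_
  simp only [mul_ite, mul_zero, Finset.sum_ite_eq', Finset.mem_univ, if_true]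
  push_cast
  rw [← Complex.mul_conj]
  simp only [Complex.star_def]
  ring

section setup

variable {d : ℕ}

/-- overlap coefficients -/
def cc (ρ σ : Matrix (Fin d) (Fin d) ℂ) (hρ : ρ.PosDef) (hσ : σ.PosDef) (i j : Fin d) : ℝ :=
  Complex.normSq ((star (hρ.1.eigenvectorUnitary : Matrix (Fin d) (Fin d) ℂ) *
    (hσ.1.eigenvectorUnitary : Matrix (Fin d) (Fin d) ℂ)) i j)

variable (ρ σ : Matrix (Fin d) (Fin d) ℂ) (hρ : ρ.PosDef) (hσ : σ.PosDef)

lemma cc_nonneg (i j : Fin d) : 0 ≤ cc ρ σ hρ hσ i j := Complex.normSq_nonneg _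

lemma cc_row_sum (i : Fin d) : ∑ j, cc ρ σ hρ hσ i j = 1 := by
  set U := (hρ.1.eigenvectorUnitary : Matrix (Fin d) (Fin d) ℂ)
  set V := (hσ.1.eigenvectorUnitary : Matrix (Fin d) (Fin d) ℂ)
  have hWW : (star U * V) * star (star U * V) = 1 := by
    simp only [Matrix.star_eq_conjTranspose, Matrix.conjTranspose_mul,
      Matrix.conjTranspose_conjTranspose]
    calc Uᴴ * V * (Vᴴ * U) = Uᴴ * (V * Vᴴ) * U := by simp only [mul_assoc]
    _ = 1 := by
        rw [show (V * Vᴴ) = 1 from Unitary.coe_mul_star_self _, mul_one,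
          show (Uᴴ * U) = 1 from Unitary.coe_star_mul_self _]
  have h := congrArg (fun M => (M i i).re) hWW
  simp only [Matrix.mul_apply, Matrix.one_apply_eq, Complex.one_re,
    Matrix.star_eq_conjTranspose, Matrix.conjTranspose_apply] at h
  rw [← h, Complex.re_sum]
  refine Finset.sum_congr rfl fun j _ => ?_
  have hz : ((star U * V) i j) = ∑ x, star (U x i) * V x j := by
    simp [Matrix.mul_apply, Matrix.conjTranspose_apply]
  rw [cc, ← hz, show star ((star U * V) i j) = (starRingEnd ℂ) ((star U * V) i j) from rfl,
    Complex.mul_conj]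
  simp
  rfl

lemma sum_p_eq_one (hρ1 : ρ.trace = 1) : ∑ i, hρ.1.eigenvalues i = 1 := by
  set U := (hρ.1.eigenvectorUnitary : Matrix (Fin d) (Fin d) ℂ)
  have h := hρ.1.spectral_theorem
  have h2 : ρ.trace = ∑ i, ((hρ.1.eigenvalues i : ℝ) : ℂ) := by
    conv_lhs => rw [h, Unitary.conjStarAlgAut_apply]
    rw [mul_assoc, Matrix.trace_mul_comm, mul_assoc,
      show ((star U : Matrix (Fin d) (Fin d) ℂ) * U) = 1 from Unitary.coe_star_mul_self _,
      mul_one, Matrix.trace_diagonal]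
    rfl
  rw [hρ1] at h2
  have h3 := congrArg Complex.re h2.symm
  simpa [Complex.re_sum] using h3

lemma trace_mpow_re (t s : ℝ) :
    ((mpow ρ t) * (mpow σ s)).trace.re
      = ∑ i, ∑ j, hρ.1.eigenvalues i ^ t * hσ.1.eigenvalues j ^ s * cc ρ σ hρ hσ i j := by
  rw [mpow, mpow, dif_pos hρ.1, dif_pos hσ.1, trace_conj_pair]
  rw [Complex.re_sum]
  refine Finset.sum_congr rfl fun i _ => ?_
  rw [Complex.re_sum]
  refine Finset.sum_congr rfl fun j _ => ?_
  simp [cc]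

lemma trace_rho_mlog_sigma_re :
    ((ρ * mlog σ).trace).re
      = ∑ i, ∑ j, hρ.1.eigenvalues i * Real.log (hσ.1.eigenvalues j) * cc ρ σ hρ hσ i j := by
  have key : (ρ * mlog σ).trace
      = (((hρ.1.eigenvectorUnitary : Matrix (Fin d) (Fin d) ℂ) *
          Matrix.diagonal (fun i => ((hρ.1.eigenvalues i : ℝ) : ℂ)) *
          star (hρ.1.eigenvectorUnitary : Matrix (Fin d) (Fin d) ℂ)) *
         ((hσ.1.eigenvectorUnitary : Matrix (Fin d) (Fin d) ℂ) *
          Matrix.diagonal (fun j => ((Real.log (hσ.1.eigenvalues j) : ℝ) : ℂ)) *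
          star (hσ.1.eigenvectorUnitary : Matrix (Fin d) (Fin d) ℂ))).trace := by
    rw [mlog, dif_pos hσ.1]
    congr 1
    congr 1
    exact hρ.1.spectral_theorem
  rw [key, trace_conj_pair, Complex.re_sum]
  refine Finset.sum_congr rfl fun i _ => ?_
  rw [Complex.re_sum]
  refine Finset.sum_congr rfl fun j _ => ?_
  simp [cc]

lemma trace_rho_mlog_rho_re :
    ((ρ * mlog ρ).trace).re = ∑ i, hρ.1.eigenvalues i * Real.log (hρ.1.eigenvalues i) := by
  have key : (ρ * mlog ρ).trace
      = (((hρ.1.eigenvectorUnitary : Matrix (Fin d) (Fin d) ℂ) *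
          Matrix.diagonal (fun i => ((hρ.1.eigenvalues i : ℝ) : ℂ)) *
          star (hρ.1.eigenvectorUnitary : Matrix (Fin d) (Fin d) ℂ)) *
         ((hρ.1.eigenvectorUnitary : Matrix (Fin d) (Fin d) ℂ) *
          Matrix.diagonal (fun j => ((Real.log (hρ.1.eigenvalues j) : ℝ) : ℂ)) *
          star (hρ.1.eigenvectorUnitary : Matrix (Fin d) (Fin d) ℂ))).trace := by
    rw [mlog, dif_pos hρ.1]
    congr 1
    congr 1
    exact hρ.1.spectral_theorem
  rw [key, trace_conj_pair, Complex.re_sum]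
  set U := (hρ.1.eigenvectorUnitary : Matrix (Fin d) (Fin d) ℂ)
  have hUU : ((star U : Matrix (Fin d) (Fin d) ℂ) * U) = 1 := Unitary.coe_star_mul_self _
  rw [hUU]
  refine Finset.sum_congr rfl fun i _ => ?_
  rw [Complex.re_sum]
  rw [Finset.sum_eq_single i]
  · simp
  · intro j _ hj
    simp [Matrix.one_apply, Ne.symm hj]
  · simp

lemma qRelEnt_eq :
    qRelEnt ρ σ = ∑ i, hρ.1.eigenvalues i * Real.log (hρ.1.eigenvalues i)
      - ∑ i, ∑ j, hρ.1.eigenvalues i * Real.log (hσ.1.eigenvalues j) * cc ρ σ hρ hσ i j := by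
  rw [qRelEnt, mul_sub, Matrix.trace_sub, Complex.sub_re,
    trace_rho_mlog_rho_re ρ hρ, trace_rho_mlog_sigma_re ρ σ hρ hσ]

end setup

section main

variable {d : ℕ} (ρ σ : Matrix (Fin d) (Fin d) ℂ)

lemma mpow_one (hρ : ρ.PosDef) : mpow ρ 1 = ρ := by
  rw [mpow, dif_pos hρ.1]
  simp only [Real.rpow_one]
  exact hρ.1.spectral_theorem.symm

lemma mpow_zero (hρ : ρ.PosDef) : mpow ρ 0 = 1 := by
  rw [mpow, dif_pos hρ.1]
  simp only [Real.rpow_zero, Complex.ofReal_one]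
  rw [Matrix.diagonal_one, mul_one]
  exact Unitary.coe_mul_star_self _

lemma key_ineq (hρ : ρ.PosDef) (hσ : σ.PosDef) (hρ1 : ρ.trace = 1) (s : ℝ) :
    Real.exp (-s * qRelEnt ρ σ) ≤ ((mpow ρ (1 - s)) * (mpow σ s)).trace.re := by
  set p := hρ.1.eigenvalues with hp
  set q := hσ.1.eigenvalues with hq
  set c := cc ρ σ hρ hσ with hc
  set w : Fin d × Fin d → ℝ := fun ij => p ij.1 * c ij.1 ij.2 with hw
  set x : Fin d × Fin d → ℝ := fun ij => s * (Real.log (q ij.2) - Real.log (p ij.1)) with hx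
  have hppos : ∀ i, 0 < p i := fun i => hρ.eigenvalues_pos i
  have hqpos : ∀ j, 0 < q j := fun j => hσ.eigenvalues_pos j
  have h₀ : ∀ ij ∈ Finset.univ (α := Fin d × Fin d), 0 ≤ w ij :=
    fun ij _ => mul_nonneg (hppos ij.1).le (cc_nonneg ρ σ hρ hσ ij.1 ij.2)
  have h₁ : ∑ ij : Fin d × Fin d, w ij = 1 := by
    rw [Fintype.sum_prod_type]
    calc ∑ i, ∑ j, p i * c i j = ∑ i, p i * ∑ j, c i j := by
          refine Finset.sum_congr rfl fun i _ => ?_; rw [Finset.mul_sum]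
      _ = ∑ i, p i := by
          refine Finset.sum_congr rfl fun i _ => ?_
          rw [cc_row_sum ρ σ hρ hσ i, mul_one]
      _ = 1 := sum_p_eq_one ρ hρ hρ1
  have hjensen := convexOn_exp.map_sum_le (t := Finset.univ) h₀ h₁
    (fun ij _ => Set.mem_univ (x ij))
  simp only [smul_eq_mul] at hjensen
  have hsum1 : ∑ ij : Fin d × Fin d, w ij * x ij = -s * qRelEnt ρ σ := by
    have hterm : ∀ (i j : Fin d), w (i, j) * x (i, j)
        = s * (p i * Real.log (q j) * c i j) - (s * (p i * Real.log (p i))) * c i j := by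
      intro i j; simp only [hw, hx]; ring
    rw [Fintype.sum_prod_type]
    calc ∑ i, ∑ j, w (i, j) * x (i, j)
        = ∑ i, ((∑ j, s * (p i * Real.log (q j) * c i j))
            - (s * (p i * Real.log (p i))) * ∑ j, c i j) := by
          refine Finset.sum_congr rfl fun i _ => ?_
          rw [Finset.mul_sum, ← Finset.sum_sub_distrib]
          exact Finset.sum_congr rfl fun j _ => hterm i j
      _ = (∑ i, ∑ j, s * (p i * Real.log (q j) * c i j)) - ∑ i, s * (p i * Real.log (p i)) := by
          rw [Finset.sum_sub_distrib]
          congr 1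
          refine Finset.sum_congr rfl fun i _ => ?_
          rw [cc_row_sum ρ σ hρ hσ i, mul_one]
      _ = s * (∑ i, ∑ j, p i * Real.log (q j) * c i j) - s * ∑ i, p i * Real.log (p i) := by
          rw [Finset.mul_sum, Finset.mul_sum]
          congr 1
          refine Finset.sum_congr rfl fun i _ => ?_
          rw [Finset.mul_sum]
      _ = -s * qRelEnt ρ σ := by rw [qRelEnt_eq ρ σ hρ hσ]; ring
  have hsum2 : ∑ ij : Fin d × Fin d, w ij * Real.exp (x ij)
      = ((mpow ρ (1 - s)) * (mpow σ s)).trace.re := by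
    rw [trace_mpow_re ρ σ hρ hσ (1 - s) s, Fintype.sum_prod_type]
    refine Finset.sum_congr rfl fun i _ => Finset.sum_congr rfl fun j _ => ?_
    have hpe : p i * Real.exp (s * (Real.log (q j) - Real.log (p i)))
        = p i ^ (1 - s) * q j ^ s := by
      rw [Real.rpow_def_of_pos (hppos i), Real.rpow_def_of_pos (hqpos j), ← Real.exp_add]
      nth_rewrite 1 [← Real.exp_log (hppos i)]
      rw [← Real.exp_add]
      congr 1
      ring
    calc w (i, j) * Real.exp (x (i, j))
        = p i * Real.exp (s * (Real.log (q j) - Real.log (p i))) * c i j := by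
          simp only [hw, hx]; ring
      _ = p i ^ (1 - s) * q j ^ s * c i j := by rw [hpe]
  rw [← hsum1, ← hsum2]
  exact hjensen

lemma trace_mpow_pos (hρ : ρ.PosDef) (hσ : σ.PosDef) (hρ1 : ρ.trace = 1) (s : ℝ) :
    0 < ((mpow ρ (1 - s)) * (mpow σ s)).trace.re :=
  lt_of_lt_of_le (Real.exp_pos _) (key_ineq ρ σ hρ hσ hρ1 s)

lemma qphi_ge (hρ : ρ.PosDef) (hσ : σ.PosDef) (hρ1 : ρ.trace = 1) (s : ℝ) : -s * qRelEnt ρ σ ≤ qphi ρ σ s := by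
  rw [qphi, Real.le_log_iff_exp_le (trace_mpow_pos ρ σ hρ hσ hρ1 s)]
  exact key_ineq ρ σ hρ hσ hρ1 s

lemma qphi_symm (s : ℝ) : qphi ρ σ s = qphi σ ρ (1 - s) := by
  rw [qphi, qphi, show (1 : ℝ) - (1 - s) = s by ring, Matrix.trace_mul_comm]

lemma qphi_zero (hρ : ρ.PosDef) (hσ : σ.PosDef) (hρ1 : ρ.trace = 1) : qphi ρ σ 0 = 0 := by
  rw [qphi, show (1 : ℝ) - 0 = 1 by ring, mpow_one ρ hρ, mpow_zero σ hσ, mul_one, hρ1]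
  simp

lemma qphi_one (hρ : ρ.PosDef) (hσ : σ.PosDef) (hσ1 : σ.trace = 1) : qphi ρ σ 1 = 0 := by
  rw [qphi_symm, show (1 : ℝ) - 1 = 0 by ring, qphi_zero σ ρ hσ hρ hσ1]

end main


/-- Properties of `Φ(a) = max_{0≤s≤1}(a·s − φ(s))`: it is continuous and monotonically
increasing on `[−D(ρ‖σ), D(σ‖ρ)]`, with `Φ(−D(ρ‖σ)) = 0` and `Φ(D(σ‖ρ)) = D(σ‖ρ)`. -/
theorem Phi_properties {d : ℕ} (ρ σ : Matrix (Fin d) (Fin d) ℂ)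
    (hρ : ρ.PosDef) (hρ1 : ρ.trace = 1)
    (hσ : σ.PosDef) (hσ1 : σ.trace = 1)
    (Φ : ℝ → ℝ)
    (hΦ : ∀ a, Φ a = ⨆ s : Set.Icc (0 : ℝ) 1, (a * (s : ℝ) - qphi ρ σ (s : ℝ))) :
    ContinuousOn Φ (Set.Icc (-(qRelEnt ρ σ)) (qRelEnt σ ρ))
      ∧ MonotoneOn Φ (Set.Icc (-(qRelEnt ρ σ)) (qRelEnt σ ρ))
      ∧ Φ (-(qRelEnt ρ σ)) = 0
      ∧ Φ (qRelEnt σ ρ) = qRelEnt σ ρ := by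
  set D1 := qRelEnt ρ σ with hD1def
  set D2 := qRelEnt σ ρ with hD2def
  have hphi0 : qphi ρ σ 0 = 0 := qphi_zero ρ σ hρ hσ hρ1
  have hphi1 : qphi ρ σ 1 = 0 := qphi_one ρ σ hρ hσ hσ1
  have hge1 : ∀ s : ℝ, -s * D1 ≤ qphi ρ σ s := qphi_ge ρ σ hρ hσ hρ1
  have hge2 : ∀ s : ℝ, (s - 1) * D2 ≤ qphi ρ σ s := by
    intro s
    have h := qphi_ge σ ρ hσ hρ hσ1 (1 - s)
    rw [← qphi_symm ρ σ s] at h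
    linarith [h, show -(1 - s) * D2 = (s - 1) * D2 by ring]
  have hD1 : 0 ≤ D1 := by have := hge1 1; rw [hphi1] at this; linarith
  have hD2 : 0 ≤ D2 := by have := hge2 0; rw [hphi0] at this; linarith
  haveI : Nonempty (Set.Icc (0 : ℝ) 1) := ⟨⟨0, by norm_num⟩⟩
  have hbdd : ∀ a : ℝ, BddAbove (Set.range fun s : Set.Icc (0 : ℝ) 1 =>
      a * (s : ℝ) - qphi ρ σ (s : ℝ)) := by
    intro a
    refine ⟨|a| + D1, ?_⟩
    rintro y ⟨s, rfl⟩
    dsimp only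
    have hs0 : (0 : ℝ) ≤ s := s.2.1
    have hs1 : (s : ℝ) ≤ 1 := s.2.2
    have h1 : a * s ≤ |a| := by
      calc a * s ≤ |a| * s := mul_le_mul_of_nonneg_right (le_abs_self a) hs0
        _ ≤ |a| * 1 := mul_le_mul_of_nonneg_left hs1 (abs_nonneg a)
        _ = |a| := mul_one _
    have h2 : -qphi ρ σ s ≤ D1 := by
      have := hge1 s
      nlinarith [this, hD1, hs0, hs1]
    linarith
  -- continuity
  have hlip : ∀ a b : ℝ, Φ a - Φ b ≤ |a - b| := by
    intro a b
    rw [hΦ a, hΦ b, sub_le_iff_le_add]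
    apply ciSup_le
    intro s
    have hs0 : (0 : ℝ) ≤ s := s.2.1
    have hs1 : (s : ℝ) ≤ 1 := s.2.2
    have h2 : b * s - qphi ρ σ s ≤ ⨆ t : Set.Icc (0 : ℝ) 1, (b * (t : ℝ) - qphi ρ σ (t : ℝ)) :=
      le_ciSup (hbdd b) s
    have h3 : (a - b) * s ≤ |a - b| := by
      calc (a - b) * s ≤ |a - b| * s := mul_le_mul_of_nonneg_right (le_abs_self _) hs0
        _ ≤ |a - b| * 1 := mul_le_mul_of_nonneg_left hs1 (abs_nonneg _)
        _ = |a - b| := mul_one _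
    linarith
  have hcont : Continuous Φ := by
    refine (LipschitzWith.of_dist_le_mul (K := 1) fun a b => ?_).continuous
    rw [NNReal.coe_one, one_mul, Real.dist_eq, Real.dist_eq, abs_sub_le_iff]
    exact ⟨hlip a b, by rw [abs_sub_comm]; exact hlip b a⟩
  have hmono : MonotoneOn Φ (Set.Icc (-D1) D2) := by
    intro a _ b _ hab
    rw [hΦ a, hΦ b]
    refine ciSup_mono (hbdd b) fun s => ?_
    have hs0 : (0 : ℝ) ≤ s := s.2.1
    nlinarith [mul_le_mul_of_nonneg_right hab hs0]
  refine ⟨hcont.continuousOn, hmono, ?_, ?_⟩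
  · rw [hΦ]
    apply le_antisymm
    · apply ciSup_le
      intro s
      have h := hge1 s
      have : -D1 * (s : ℝ) = -(s : ℝ) * D1 := by ring
      linarith [this ▸ h]
    · have h0 : (0 : ℝ) = -D1 * ((⟨0, by norm_num⟩ : Set.Icc (0 : ℝ) 1) : ℝ)
          - qphi ρ σ ((⟨0, by norm_num⟩ : Set.Icc (0 : ℝ) 1) : ℝ) := by
        simp [hphi0]
      calc (0 : ℝ) = _ := h0
        _ ≤ _ := le_ciSup (hbdd (-D1)) _
  · rw [hΦ]
    apply le_antisymm
    · apply ciSup_le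
      intro s
      have h := hge2 s
      nlinarith [h]
    · have h0 : D2 = D2 * ((⟨1, by norm_num⟩ : Set.Icc (0 : ℝ) 1) : ℝ)
          - qphi ρ σ ((⟨1, by norm_num⟩ : Set.Icc (0 : ℝ) 1) : ℝ) := by
        simp [hphi1]
      calc D2 = _ := h0
        _ ≤ _ := le_ciSup (hbdd D2) _
end
end
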